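/- arXiv:1412.5350 — 4 statements merged into one kernel-verified Lean document; each statement's English description precedes it below -/
import Mathlib

section
/- Let w ⊆ ℝ^d be a closed set, let G be a locally concave function on w with values in ℝ ∪ {+∞}, and let M be a w-martingale. Then the function n ↦ E G(M_n) is non-increasing in n. -/
open Set MeasureTheory
open scoped ENNReal

noncomputable section

/-- `Euc d` is the Euclidean space `ℝ^d`. -/
abbrev Euc (d : ℕ) := EuclideanSpace ℝ (Fin d)

/-- The fixed boundary of `w`: the set of locally extremal points of `w`,
i.e. the points of `∂w` that do not lie on any open segment contained in `cl w`. -/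
def fixedBoundary {d : ℕ} (w : Set (Euc d)) : Set (Euc d) :=
  {x | x ∈ frontier w ∧ ∀ y z : Euc d, y ≠ z → openSegment ℝ y z ⊆ closure w →
      x ∉ openSegment ℝ y z}

/-- The free boundary of `w`. -/
def freeBoundary {d : ℕ} (w : Set (Euc d)) : Set (Euc d) := frontier w \ fixedBoundary w

/-- A function `G : w → ℝ ∪ {+∞}` is locally concave on `w` if its restriction to every
segment contained in `w` is concave. -/
def LocallyConcaveOn {d : ℕ} (w : Set (Euc d)) (G : Euc d → EReal) : Prop :=
  ∀ x ∈ w, ∀ y ∈ w, segment ℝ x y ⊆ w → ∀ a b : ℝ, 0 ≤ a → 0 ≤ b → a + b = 1 →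
    (a : EReal) * G x + (b : EReal) * G y ≤ G (a • x + b • y)

/-- The class `Λ_{w,f}` of locally concave functions on `w` majorizing `f` on the
fixed boundary of `w`. -/
def Lambda {d : ℕ} (w : Set (Euc d)) (f : Euc d → EReal) : Set (Euc d → EReal) :=
  {G | LocallyConcaveOn w G ∧ ∀ x ∈ fixedBoundary w, f x ≤ G x}

/-- The minimal locally concave function `𝔅_{w,f}`, the pointwise infimum of `Λ_{w,f}`. -/
def minLocConc {d : ℕ} (w : Set (Euc d)) (f : Euc d → EReal) (x : Euc d) : EReal :=
  ⨅ G ∈ Lambda w f, G x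

/-- A point `x` is an exposed point of a set `C ⊆ ℝ^d` if there is an affine
hyperplane whose intersection with `C` is exactly `{x}`. -/
def IsExposedPoint {d : ℕ} (C : Set (Euc d)) (x : Euc d) : Prop :=
  ∃ (a : Euc d) (c : ℝ), a ≠ 0 ∧ {y : Euc d | inner ℝ a y = c} ∩ C = {x}

/-- A convex set is strictly convex if every point of its boundary is an exposed point
of its closure. -/
def StrictlyConvexSet {d : ℕ} (C : Set (Euc d)) : Prop :=
  Convex ℝ C ∧ ∀ x ∈ frontier C, IsExposedPoint (closure C) x

/-- The nonnegative part of an extended real, as an `ℝ≥0∞`-valued quantity. -/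
def erealToENNReal (y : EReal) : ℝ≥0∞ := if y = ⊤ then ⊤ else ENNReal.ofReal y.toReal

/-- Expectation of an `EReal`-valued random variable: the difference of the (unsigned)
integrals of its positive and negative parts. -/
def erealExp {α : Type} [MeasurableSpace α] (μ : MeasureTheory.Measure α)
    (Y : α → EReal) : EReal :=
  ((∫⁻ a, erealToENNReal (Y a) ∂μ : ℝ≥0∞) : EReal) -
    ((∫⁻ a, erealToENNReal (-(Y a)) ∂μ : ℝ≥0∞) : EReal)

open MeasureTheory in
/-- The data `(μ, F, M, M∞)` is a `w`-martingale: `μ` is a probability measure, each `F n`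
is a finite σ-algebra, `F 0` is trivial, `M n` is `F n`-measurable, `M∞` is integrable with
values in the fixed boundary of `w`, `M n = E(M∞ | F n)`, and for every `n` and every atom
`σ` of `F n`, the convex hull of `M_n(σ)` together with `{M_{n+1}(z) : z ∈ σ}` lies in `w`. -/
def IsWMart {d : ℕ} {α : Type} [mα : MeasurableSpace α] (μ : Measure α)
    (F : Filtration ℕ mα) (M : ℕ → α → Euc d) (Minf : α → Euc d)
    (w : Set (Euc d)) : Prop :=
  IsProbabilityMeasure μ ∧
  (∀ n, {s : Set α | MeasurableSet[F n] s}.Finite) ∧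
  ((F 0 : MeasurableSpace α) = ⊥) ∧
  (∀ n, Measurable[F n] (M n)) ∧
  Integrable Minf μ ∧
  (∀ a, Minf a ∈ fixedBoundary w) ∧
  (∀ n, M n =ᵐ[μ] μ[Minf | F n]) ∧
  (∀ n (σ : Set α), MeasurableSet[F n] σ → σ.Nonempty →
    (∀ t : Set α, MeasurableSet[F n] t → t ⊆ σ → t = ∅ ∨ t = σ) →
    ∀ a ∈ σ, convexHull ℝ ({M n a} ∪ (M (n+1)) '' σ) ⊆ w)

/-- A bundled `w`-martingale. -/
structure WMartingale {d : ℕ} (w : Set (Euc d)) : Type 1 where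
  α : Type
  mα : MeasurableSpace α
  μ : @MeasureTheory.Measure α mα
  F : @MeasureTheory.Filtration α ℕ _ mα
  M : ℕ → α → Euc d
  Minf : α → Euc d
  isWMart : @IsWMart d α mα μ F M Minf w

/-- A `w`-martingale is simple if `M n = M∞` for some `n`; it starts at `x` if `M 0 ≡ x`.
The set `w` is strongly martingale connected if every `x ∈ w` is the start of a simple
`w`-martingale. -/
def StronglyMartingaleConnected {d : ℕ} (w : Set (Euc d)) : Prop :=
  ∀ x ∈ w, ∃ X : WMartingale w, (∃ n, X.M n = X.Minf) ∧ (∀ a, X.M 0 a = x)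

/-- The martingale Bellman function `ℬ_{w,f}(x) = sup {E f(M∞) : M₀ = x, M ∈ 𝓜_w}`. -/
def martBellman {d : ℕ} (w : Set (Euc d)) (f : Euc d → ℝ) (x : Euc d) : EReal :=
  ⨆ (X : WMartingale w) (_ : ∀ a, X.M 0 a = x),
    @erealExp X.α X.mα X.μ (fun a => ((f (X.Minf a) : ℝ) : EReal))

/-! All the σ-algebras `F n` are finite, so every expectation is a finite sum over atoms. On an
atom `σ` of `F n` the martingale property makes the value of `M n` the `μ`-barycenter of the values
of `M (n+1)` on the atoms of `F (n+1)` inside `σ`; all these points lie in a convex subset of `w`,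
so Jensen's inequality for the locally concave `G` gives `E G(M (n+1)) ≤ E G(M n)` atom by atom. -/

local notation "measurableAtom[" m "]" => @measurableAtom _ m

section FiniteMeasurableSpace

variable {α : Type*} {m : MeasurableSpace α}

theorem measurableSet_measurableAtom_of_finite (hfin : {s : Set α | MeasurableSet s}.Finite)
    (x : α) : MeasurableSet (measurableAtom x) := by
  have : MeasurableSpace.CountablyGenerated α :=
    ⟨⟨_, hfin.countable, MeasurableSpace.generateFrom_measurableSet.symm⟩⟩
  exact MeasurableSpace.measurableSet_measurableAtom x

theorem eq_empty_or_eq_measurableAtom {t : Set α} {x : α} (ht : MeasurableSet t)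
    (hsub : t ⊆ measurableAtom x) : t = ∅ ∨ t = measurableAtom x := by
  refine t.eq_empty_or_nonempty.imp id fun ⟨y, hy⟩ => hsub.antisymm ?_
  rw [← measurableAtom_eq_of_mem (hsub hy)]
  exact measurableAtom_subset ht hy

theorem Measurable.eq_of_mem_measurableAtom {β : Type*} [MeasurableSpace β]
    [MeasurableSingletonClass β] {f : α → β} (hf : Measurable f) {x y : α}
    (hy : y ∈ measurableAtom x) : f y = f x :=
  mem_of_mem_measurableAtom hy (hf (measurableSet_singleton (f x))) rfl

theorem exists_finset_pairwiseDisjoint_measurableAtom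
    (hfin : {s : Set α | MeasurableSet s}.Finite) :
    ∃ R : Finset α, (R : Set α).PairwiseDisjoint measurableAtom ∧
      ⋃ x ∈ R, measurableAtom x = univ := by
  obtain ⟨R, -, hR⟩ := (univ : Set α).exists_subset_bijOn measurableAtom
  have himage : (measurableAtom '' R).Finite := hR.image_eq ▸ hfin.subset
    (by rintro _ ⟨x, -, rfl⟩; exact measurableSet_measurableAtom_of_finite hfin x)
  have hRfin : R.Finite := himage.of_finite_image hR.injOn
  refine ⟨hRfin.toFinset, fun x hx y hy hxy => disjoint_measurableAtom_of_notMem fun hmem => ?_,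
    eq_univ_of_forall fun a => ?_⟩
  · rw [Finite.coe_toFinset] at hx hy
    exact hxy (hR.injOn hx hy (measurableAtom_eq_of_mem hmem))
  · obtain ⟨x, hx, hxa⟩ := hR.surjOn (mem_image_of_mem measurableAtom (mem_univ a))
    exact mem_biUnion (hRfin.mem_toFinset.2 hx) (hxa ▸ mem_measurableAtom_self a)

end FiniteMeasurableSpace

theorem measurableAtom_anti {α : Type*} {m₁ m₂ : MeasurableSpace α} (h : m₁ ≤ m₂) (x : α) :
    measurableAtom[m₂] x ⊆ measurableAtom[m₁] x := by
  intro y hy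
  simp only [measurableAtom, mem_iInter] at hy ⊢
  exact fun s hxs hs => hy s hxs (h s hs)

namespace EReal

theorem coe_mul_sum_of_nonneg {ι : Type*} {r : ℝ} (hr : 0 ≤ r) (s : Finset ι) (f : ι → EReal) :
    (r : EReal) * ∑ i ∈ s, f i = ∑ i ∈ s, (r : EReal) * f i := by
  classical
  induction s using Finset.induction_on with
  | empty => simp
  | insert j s hj ih =>
    rw [Finset.sum_insert hj, Finset.sum_insert hj,
      left_distrib_of_nonneg_of_ne_top (by exact_mod_cast hr) (coe_ne_top r), ih]

theorem sum_coe_mul_eq_coe_mul_sum_div {ι : Type*} {C : ℝ} (hC : 0 < C) (s : Finset ι)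
    (c : ι → ℝ) (f : ι → EReal) :
    ∑ i ∈ s, (c i : EReal) * f i = (C : EReal) * ∑ i ∈ s, ((c i / C : ℝ) : EReal) * f i := by
  rw [coe_mul_sum_of_nonneg hC.le]
  refine Finset.sum_congr rfl fun i _ => ?_
  rw [← mul_assoc, ← coe_mul, mul_div_cancel₀ _ hC.ne']

theorem coe_sum_mul_of_nonneg {ι : Type*} {s : Finset ι} {c : ι → ℝ} (hc : ∀ i ∈ s, 0 ≤ c i)
    (x : EReal) : ((∑ i ∈ s, c i : ℝ) : EReal) * x = ∑ i ∈ s, (c i : EReal) * x := by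
  classical
  induction s using Finset.induction_on with
  | empty => simp
  | insert j s hj ih =>
    have hcs : ∀ i ∈ s, 0 ≤ c i := fun i hi => hc i (Finset.mem_insert_of_mem hi)
    rw [Finset.sum_insert hj, Finset.sum_insert hj, coe_add,
      right_distrib_of_nonneg (by exact_mod_cast hc j (Finset.mem_insert_self j s))
        (by exact_mod_cast Finset.sum_nonneg hcs), ih hcs]

theorem coe_toENNReal_sub_coe_toENNReal_neg (x : EReal) :
    (x.toENNReal : EReal) - ((-x).toENNReal : EReal) = x := by
  rw [coe_toENNReal_eq_max, coe_toENNReal_eq_max]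
  induction x using EReal.rec with
  | bot => simp
  | top => simp
  | coe x =>
    rcases le_total 0 x with hx | hx
    · rw [max_eq_right (by exact_mod_cast hx), max_eq_left (by exact_mod_cast neg_nonpos.2 hx),
        sub_zero]
    · rw [max_eq_left (by exact_mod_cast hx), max_eq_right (by exact_mod_cast neg_nonneg.2 hx),
        ← coe_neg, ← coe_zero, ← coe_sub, zero_sub, neg_neg]

theorem coe_ennreal_sum_sub_coe_ennreal_sum {ι : Type*} (s : Finset ι) (p n : ι → ℝ≥0∞) :
    ((∑ i ∈ s, p i : ℝ≥0∞) : EReal) - ((∑ i ∈ s, n i : ℝ≥0∞) : EReal) =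
      ∑ i ∈ s, ((p i : EReal) - (n i : EReal)) := by
  classical
  induction s using Finset.induction_on with
  | empty => simp
  | insert j s hj ih =>
    rw [Finset.sum_insert hj, Finset.sum_insert hj, Finset.sum_insert hj, coe_ennreal_add,
      coe_ennreal_add, add_sub_add_comm (.inl (coe_ennreal_ne_bot _))
        (.inr (coe_ennreal_ne_bot _)), ih]

end EReal

section Partition

variable {ι : Type*} (s : Finset ι)

theorem setIntegral_biUnion_eq_sum_of_forall_mem_eq {α E : Type*} [MeasurableSpace α]
    [NormedAddCommGroup E] [NormedSpace ℝ E] [CompleteSpace E] (μ : Measure α) [IsFiniteMeasure μ]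
    {S : ι → Set α} (hS : ∀ i ∈ s, MeasurableSet (S i)) (hdisj : (s : Set ι).PairwiseDisjoint S)
    {X : α → E} {v : ι → E} (hX : ∀ i ∈ s, ∀ a ∈ S i, X a = v i) :
    ∫ a in ⋃ i ∈ s, S i, X a ∂μ = ∑ i ∈ s, μ.real (S i) • v i := by
  rw [integral_biUnion_finset s hS hdisj fun i hi =>
    (integrableOn_const (measure_ne_top μ _)).congr_fun (fun a ha => (hX i hi a ha).symm) (hS i hi)]
  refine Finset.sum_congr rfl fun i hi => ?_
  rw [setIntegral_congr_fun (hS i hi) (hX i hi), setIntegral_const]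

theorem erealExp_eq_sum_of_forall_mem_eq {α : Type} [MeasurableSpace α] (μ : Measure α)
    [IsFiniteMeasure μ] {S : ι → Set α} (hS : ∀ i ∈ s, MeasurableSet (S i))
    (hdisj : (s : Set ι).PairwiseDisjoint S) (hcov : ⋃ i ∈ s, S i = univ) {f : α → EReal}
    {v : ι → EReal} (hf : ∀ i ∈ s, ∀ a ∈ S i, f a = v i) :
    erealExp μ f = ∑ i ∈ s, (μ.real (S i) : EReal) * v i := by
  have lintegral_eq (g : EReal → ℝ≥0∞) : ∫⁻ a, g (f a) ∂μ = ∑ i ∈ s, μ (S i) * g (v i) := by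
    rw [← setLIntegral_univ, ← hcov, lintegral_biUnion_finset hdisj hS]
    refine Finset.sum_congr rfl fun i hi => ?_
    rw [setLIntegral_congr_fun (hS i hi) fun a ha => by rw [hf i hi a ha], setLIntegral_const,
      mul_comm]
  have hμ (i : ι) : μ (S i) = (μ.real (S i) : EReal).toENNReal := by
    rw [EReal.real_coe_toENNReal, measureReal_def, ENNReal.ofReal_toReal (measure_ne_top μ _)]
  have hnn (i : ι) : (0 : EReal) ≤ μ.real (S i) := by exact_mod_cast measureReal_nonneg
  have : erealToENNReal = EReal.toENNReal := rfl
  rw [erealExp, this, lintegral_eq EReal.toENNReal, lintegral_eq fun y => (-y).toENNReal,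
    EReal.coe_ennreal_sum_sub_coe_ennreal_sum]
  refine Finset.sum_congr rfl fun i _ => ?_
  rw [hμ, ← EReal.toENNReal_mul (hnn i), ← EReal.toENNReal_mul (hnn i), mul_neg,
    EReal.coe_toENNReal_sub_coe_toENNReal_neg]

end Partition

namespace LocallyConcaveOn

variable {d : ℕ} {w K : Set (Euc d)} {G : Euc d → EReal} (hG : LocallyConcaveOn w G)
  (hK : Convex ℝ K) (hKw : K ⊆ w) {ι : Type*}
include hG hK hKw

theorem sum_mul_le_map_sum (s : Finset ι) {c : ι → ℝ} {x : ι → Euc d}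
    (hc : ∀ i ∈ s, 0 ≤ c i) (hc₁ : ∑ i ∈ s, c i = 1) (hx : ∀ i ∈ s, x i ∈ K) :
    ∑ i ∈ s, (c i : EReal) * G (x i) ≤ G (∑ i ∈ s, c i • x i) := by
  classical
  induction s using Finset.induction_on generalizing c with
  | empty => simp at hc₁
  | insert j s hj ih =>
    have hcs : ∀ i ∈ s, 0 ≤ c i := fun i hi => hc i (Finset.mem_insert_of_mem hi)
    have hxs : ∀ i ∈ s, x i ∈ K := fun i hi => hx i (Finset.mem_insert_of_mem hi)
    have hxj : x j ∈ K := hx j (Finset.mem_insert_self j s)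
    rw [Finset.sum_insert hj] at hc₁ ⊢
    rw [Finset.sum_insert hj]
    set b := ∑ i ∈ s, c i
    rcases (Finset.sum_nonneg hcs).eq_or_lt with hb | hb
    · have hzero : ∀ i ∈ s, c i = 0 := (Finset.sum_eq_zero_iff_of_nonneg hcs).1 hb.symm
      have hcj : c j = 1 := by linarith
      rw [Finset.sum_eq_zero fun i hi => by rw [hzero i hi, EReal.coe_zero, zero_mul],
        Finset.sum_eq_zero fun i hi => by rw [hzero i hi, zero_smul], hcj]
      simp
    set y := ∑ i ∈ s, (c i / b) • x i
    have hy : y ∈ K := hK.sum_mem (fun i hi => div_nonneg (hcs i hi) hb.le)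
      (by rw [← Finset.sum_div, div_self hb.ne']) hxs
    have hby : b • y = ∑ i ∈ s, c i • x i := by
      simp only [y, Finset.smul_sum, smul_smul]
      exact Finset.sum_congr rfl fun i _ => by rw [mul_div_cancel₀ _ hb.ne']
    have hsum : ∑ i ∈ s, (c i : EReal) * G (x i) ≤ (b : EReal) * G y := by
      rw [EReal.sum_coe_mul_eq_coe_mul_sum_div hb]
      exact mul_le_mul_of_nonneg_left (ih (fun i hi => div_nonneg (hcs i hi) hb.le)
        (by rw [← Finset.sum_div, div_self hb.ne']) hxs) (by exact_mod_cast hb.le)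
    calc (c j : EReal) * G (x j) + ∑ i ∈ s, (c i : EReal) * G (x i)
        ≤ (c j : EReal) * G (x j) + (b : EReal) * G y := add_le_add_right hsum _
      _ ≤ G (c j • x j + b • y) :=
          hG _ (hKw hxj) _ (hKw hy) ((hK.segment_subset hxj hy).trans hKw) _ _
            (hc j (Finset.mem_insert_self j s)) hb.le hc₁
      _ = G (c j • x j + ∑ i ∈ s, c i • x i) := by rw [hby]

theorem sum_mul_le_of_sum_smul_eq (s : Finset ι) {c : ι → ℝ} {x : ι → Euc d} {y : Euc d}
    (hc : ∀ i ∈ s, 0 ≤ c i) (hx : ∀ i ∈ s, x i ∈ K)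
    (hy : (∑ i ∈ s, c i) • y = ∑ i ∈ s, c i • x i) :
    ∑ i ∈ s, (c i : EReal) * G (x i) ≤ ((∑ i ∈ s, c i : ℝ) : EReal) * G y := by
  set C := ∑ i ∈ s, c i
  rcases (Finset.sum_nonneg hc).eq_or_lt with hC | hC
  · have hzero : ∀ i ∈ s, c i = 0 := (Finset.sum_eq_zero_iff_of_nonneg hc).1 hC.symm
    rw [Finset.sum_eq_zero fun i hi => by rw [hzero i hi, EReal.coe_zero, zero_mul],
      show C = 0 from hC.symm]
    simp
  have hy' : y = ∑ i ∈ s, (c i / C) • x i := by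
    simp only [div_eq_inv_mul, ← smul_smul, ← Finset.smul_sum, ← hy]
    exact (inv_smul_smul₀ hC.ne' y).symm
  rw [EReal.sum_coe_mul_eq_coe_mul_sum_div hC, hy']
  exact mul_le_mul_of_nonneg_left (hG.sum_mul_le_map_sum hK hKw s
    (fun i hi => div_nonneg (hc i hi) hC.le) (by rw [← Finset.sum_div, div_self hC.ne']) hx)
    (by exact_mod_cast hC.le)

end LocallyConcaveOn

open Classical in
theorem LocallyConcaveOn.sum_measureReal_mul_le_of_measurableAtom {d : ℕ} {w : Set (Euc d)}
    {G : Euc d → EReal} (hG : LocallyConcaveOn w G) {α : Type*} {m₁ m₂ : MeasurableSpace α}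
    [mα : MeasurableSpace α] (μ : Measure α) [IsFiniteMeasure μ] (h₁₂ : m₁ ≤ m₂) (h₂ : m₂ ≤ mα)
    (hfin₂ : {s | MeasurableSet[m₂] s}.Finite) {X Y : α → Euc d} (hX : Measurable[m₁] X)
    (hY : Measurable[m₂] Y) {R : Finset α}
    (hdisj : (R : Set α).PairwiseDisjoint measurableAtom[m₂])
    (hcov : ⋃ y ∈ R, measurableAtom[m₂] y = univ) (z : α)
    (hint : ∫ a in measurableAtom[m₁] z, X a ∂μ = ∫ a in measurableAtom[m₁] z, Y a ∂μ)
    (hconv : convexHull ℝ ({X z} ∪ Y '' measurableAtom[m₁] z) ⊆ w) :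
    ∑ y ∈ R with measurableAtom[m₁] y = measurableAtom[m₁] z,
        (μ.real (measurableAtom[m₂] y) : EReal) * G (Y y) ≤
      ∑ y ∈ R with measurableAtom[m₁] y = measurableAtom[m₁] z,
        (μ.real (measurableAtom[m₂] y) : EReal) * G (X y) := by
  set σ := measurableAtom[m₁] z
  set s := R.filter fun y => measurableAtom[m₁] y = σ
  have hmem : ∀ y ∈ s, y ∈ σ := fun y hy =>
    (Finset.mem_filter.1 hy).2 ▸ @mem_measurableAtom_self _ m₁ y
  have hmeas : ∀ y ∈ s, MeasurableSet (measurableAtom[m₂] y) := fun y _ =>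
    h₂ _ (measurableSet_measurableAtom_of_finite hfin₂ y)
  have hdisj_s : (s : Set α).PairwiseDisjoint measurableAtom[m₂] :=
    hdisj.subset (Finset.coe_subset.2 (Finset.filter_subset _ _))
  have hσ : ⋃ y ∈ s, measurableAtom[m₂] y = σ := by
    refine subset_antisymm (iUnion₂_subset fun y hy => ?_) fun b hb => ?_
    · rw [← (Finset.mem_filter.1 hy).2]
      exact measurableAtom_anti h₁₂ y
    · obtain ⟨y, hy, hby⟩ := mem_iUnion₂.1 (hcov ▸ mem_univ b)
      refine mem_biUnion (Finset.mem_filter.2 ⟨hy, ?_⟩) hby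
      rw [← @measurableAtom_eq_of_mem _ m₁ _ _ (measurableAtom_anti h₁₂ y hby)]
      exact @measurableAtom_eq_of_mem _ m₁ _ _ hb
  have hXz : ∀ y ∈ s, X y = X z := fun y hy => hX.eq_of_mem_measurableAtom (hmem y hy)
  have hbary : (∑ y ∈ s, μ.real (measurableAtom[m₂] y)) • X z =
      ∑ y ∈ s, μ.real (measurableAtom[m₂] y) • Y y := by
    rw [← hσ, setIntegral_biUnion_eq_sum_of_forall_mem_eq s μ hmeas hdisj_s
        fun y _ a ha => (hX.mono h₁₂ le_rfl).eq_of_mem_measurableAtom ha,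
      setIntegral_biUnion_eq_sum_of_forall_mem_eq s μ hmeas hdisj_s
        fun y _ a ha => hY.eq_of_mem_measurableAtom ha] at hint
    rw [Finset.sum_smul, ← hint]
    exact Finset.sum_congr rfl fun y hy => by rw [hXz y hy]
  calc ∑ y ∈ s, (μ.real (measurableAtom[m₂] y) : EReal) * G (Y y)
      ≤ ((∑ y ∈ s, μ.real (measurableAtom[m₂] y) : ℝ) : EReal) * G (X z) :=
        hG.sum_mul_le_of_sum_smul_eq (convex_convexHull ℝ _) hconv s
          (fun _ _ => measureReal_nonneg)
          (fun y hy => subset_convexHull ℝ _ (Or.inr ⟨y, hmem y hy, rfl⟩)) hbary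
    _ = ∑ y ∈ s, (μ.real (measurableAtom[m₂] y) : EReal) * G (X y) := by
        rw [EReal.coe_sum_mul_of_nonneg fun _ _ => measureReal_nonneg]
        exact Finset.sum_congr rfl fun y hy => by rw [hXz y hy]

theorem IsWMart.erealExp_comp_succ_le {d : ℕ} {w : Set (Euc d)} {G : Euc d → EReal}
    (hG : LocallyConcaveOn w G) {α : Type} [mα : MeasurableSpace α] {μ : Measure α}
    {F : Filtration ℕ mα} {M : ℕ → α → Euc d} {Minf : α → Euc d} (h : IsWMart μ F M Minf w)
    (n : ℕ) : erealExp μ (fun a => G (M (n + 1) a)) ≤ erealExp μ (fun a => G (M n a)) := by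
  classical
  obtain ⟨hprob, hfin, -, hmeas, hMinf, -, hcond, hconv⟩ := h
  have hle : F n ≤ F (n + 1) := F.mono n.le_succ
  obtain ⟨R, hdisj, hcov⟩ := exists_finset_pairwiseDisjoint_measurableAtom (hfin (n + 1))
  have hexp (X : α → Euc d) (hX : Measurable[F (n + 1)] X) :
      erealExp μ (fun a => G (X a)) =
        ∑ y ∈ R, (μ.real (measurableAtom[F (n + 1)] y) : EReal) * G (X y) :=
    erealExp_eq_sum_of_forall_mem_eq R μ
      (fun y _ => F.le _ _ (measurableSet_measurableAtom_of_finite (hfin _) y)) hdisj hcov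
      fun y _ a ha => by rw [hX.eq_of_mem_measurableAtom ha]
  have hmaps : ∀ y ∈ R, measurableAtom[F n] y ∈ R.image measurableAtom[F n] :=
    fun y hy => Finset.mem_image_of_mem _ hy
  rw [hexp _ (hmeas (n + 1)), hexp _ ((hmeas n).mono hle le_rfl),
    ← Finset.sum_fiberwise_of_maps_to hmaps, ← Finset.sum_fiberwise_of_maps_to hmaps]
  refine Finset.sum_le_sum fun _ hσ => ?_
  obtain ⟨z, -, rfl⟩ := Finset.mem_image.1 hσ
  have hmeasσ : MeasurableSet[F n] (measurableAtom[F n] z) :=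
    measurableSet_measurableAtom_of_finite (hfin n) z
  have hz : z ∈ measurableAtom[F n] z := @mem_measurableAtom_self _ (F n) z
  have hint (k : ℕ) (hk : n ≤ k) :
      ∫ a in measurableAtom[F n] z, M k a ∂μ = ∫ a in measurableAtom[F n] z, Minf a ∂μ := by
    rw [setIntegral_congr_ae (F.le n _ hmeasσ) ((hcond k).mono fun a ha _ => ha)]
    exact setIntegral_condExp (F.le k) hMinf (F.mono hk _ hmeasσ)
  exact hG.sum_measureReal_mul_le_of_measurableAtom μ hle (F.le _) (hfin _) (hmeas n)
    (hmeas (n + 1)) hdisj hcov z ((hint n le_rfl).trans (hint (n + 1) n.le_succ).symm)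
    (hconv n _ hmeasσ ⟨z, hz⟩ (fun _ => eq_empty_or_eq_measurableAtom) z hz)

theorem stmt4_general {d : ℕ} (w : Set (Euc d)) (G : Euc d → EReal)
    (hG : LocallyConcaveOn w G) (X : WMartingale w) :
    ∀ m n : ℕ, m ≤ n →
      @erealExp X.α X.mα X.μ (fun a => G (X.M n a)) ≤
        @erealExp X.α X.mα X.μ (fun a => G (X.M m a)) := fun _ _ hmn =>
  antitone_nat_of_succ_le (f := fun n => @erealExp X.α X.mα X.μ (fun a => G (X.M n a)))
    (fun n => X.isWMart.erealExp_comp_succ_le (mα := X.mα) hG n) hmn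

/-- **Bellman induction.** Let `w ⊆ ℝ^d` be closed, `G` locally concave on `w`
with values in `ℝ ∪ {+∞}`, and `M` a `w`-martingale. Then `n ↦ E G(M_n)` is non-increasing. -/
theorem stmt4 {d : ℕ} (w : Set (Euc d)) (hw : IsClosed w) (G : Euc d → EReal)
    (hG : LocallyConcaveOn w G) (X : WMartingale w) :
    ∀ m n : ℕ, m ≤ n →
      @erealExp X.α X.mα X.μ (fun a => G (X.M n a)) ≤
        @erealExp X.α X.mα X.μ (fun a => G (X.M m a)) :=
  stmt4_general w G hG X
end
end

section
/- Let w ⊆ ℝ^d be a strongly martingale connected closed set and let f : ∂_fixed w → ℝ be bounded from below. Then the martingale Bellman function ℬ_{w,f} belongs to Λ_{w,f}; that is, ℬ_{w,f} is locally concave on w and ℬ_{w,f}(x) ≥ f(x) for every x ∈ ∂_fixed w. -/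
open Set MeasureTheory
open scoped ENNReal

noncomputable section

/-!
The constant martingale sitting at a point `x` of the fixed boundary shows `f x ≤ ℬ(x)`.
For local concavity, let `[x, y] ⊆ w`, `a + b = 1`, and let `X`, `Y` be `w`-martingales starting
at `x` and `y`. On the disjoint union of their probability spaces, weighted by `a` and `b`,
glue them into a martingale `Z` that starts at `a x + b y`, moves in its first step to `x` or `y`
(a step whose convex hull lies in `[x, y] ⊆ w`), and then follows `X` or `Y`. Its expected
payoff is `a E f(X∞) + b E f(Y∞)`, so taking suprema over `X` and `Y` gives
`a ℬ(x) + b ℬ(y) ≤ ℬ(a x + b y)`.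
-/

namespace EReal

lemma coe_mul_iSup {ι : Sort*} (u : ι → EReal) {a : ℝ} (ha : 0 < a) :
    (a : EReal) * ⨆ i, u i = ⨆ i, (a : EReal) * u i := by
  refine Monotone.map_iSup_of_continuousAt (f := fun t => (a : EReal) * t) ?_
    (fun s t hst => mul_le_mul_of_nonneg_left hst (by exact_mod_cast ha.le))
    (coe_mul_bot_of_pos ha)
  have ha0 : (a : EReal) ≠ 0 := by exact_mod_cast ha.ne'
  exact (continuousAt_mul (.inl ha0) (.inl ha0) (.inl (coe_ne_bot a))
    (.inl (coe_ne_top a))).comp (continuousAt_const.prodMk continuousAt_id)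

lemma iSup_add_iSup_le {ι κ : Sort*} {u : ι → EReal} {v : κ → EReal} {c : EReal}
    (h : ∀ i j, u i + v j ≤ c) : (⨆ i, u i) + (⨆ j, v j) ≤ c := by
  refine add_le_of_forall_lt fun s hs t ht => ?_
  obtain ⟨i, hi⟩ := lt_iSup_iff.1 hs
  obtain ⟨j, hj⟩ := lt_iSup_iff.1 ht
  exact (add_le_add hi.le hj.le).trans (h i j)

end EReal

lemma erealExp_const {α : Type} [MeasurableSpace α] (μ : Measure α) [IsProbabilityMeasure μ]
    (r : ℝ) : erealExp μ (fun _ => (r : EReal)) = r := by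
  simp only [erealExp, erealToENNReal, EReal.coe_ne_top, ← EReal.coe_neg, if_false,
    EReal.toReal_coe, lintegral_const, measure_univ, mul_one, EReal.coe_ennreal_ofReal]
  rw [← EReal.coe_sub, max_zero_sub_max_neg_zero_eq_self]

lemma setIntegral_eq_of_ae_eq_condExp {α E : Type*} {m mα : MeasurableSpace α} {μ : Measure α}
    [IsFiniteMeasure μ] [NormedAddCommGroup E] [NormedSpace ℝ E] [CompleteSpace E]
    {f g : α → E} {s : Set α} (hm : m ≤ mα) (hf : Integrable f μ) (hg : g =ᵐ[μ] μ[f | m])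
    (hs : MeasurableSet[m] s) : ∫ u in s, g u ∂μ = ∫ u in s, f u ∂μ := by
  rw [setIntegral_congr_ae (hm s hs) (hg.mono fun _ h _ => h)]
  exact setIntegral_condExp hm hf hs

section SumSigmaAlgebra

variable {α β : Type*}

lemma measurableEmbedding_inl [MeasurableSpace α] [MeasurableSpace β] :
    MeasurableEmbedding (@Sum.inl α β) :=
  ⟨Sum.inl_injective, measurable_inl, fun _ hs => hs.inl_image⟩

lemma measurableEmbedding_inr [MeasurableSpace α] [MeasurableSpace β] :
    MeasurableEmbedding (@Sum.inr α β) :=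
  ⟨Sum.inr_injective, measurable_inr, fun _ hs => hs.inr_image⟩

abbrev MeasurableSpace.sum (m₁ : MeasurableSpace α) (m₂ : MeasurableSpace β) :
    MeasurableSpace (α ⊕ β) :=
  @Sum.instMeasurableSpace α β m₁ m₂

lemma MeasurableSpace.sum_mono {m₁ m₁' : MeasurableSpace α} {m₂ m₂' : MeasurableSpace β}
    (h₁ : m₁ ≤ m₁') (h₂ : m₂ ≤ m₂') : m₁.sum m₂ ≤ m₁'.sum m₂' :=
  fun _ hs => ⟨h₁ _ hs.1, h₂ _ hs.2⟩

lemma finite_measurableSet_sum {m₁ : MeasurableSpace α} {m₂ : MeasurableSpace β}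
    (h₁ : {s : Set α | MeasurableSet[m₁] s}.Finite)
    (h₂ : {s : Set β | MeasurableSet[m₂] s}.Finite) :
    {s : Set (α ⊕ β) | MeasurableSet[m₁.sum m₂] s}.Finite := by
  have hinj : Function.Injective fun s : Set (α ⊕ β) => (Sum.inl ⁻¹' s, Sum.inr ⁻¹' s) :=
    fun s t h => by
      simp only [Prod.mk.injEq] at h
      ext (u | u)
      exacts [Set.ext_iff.1 h.1 u, Set.ext_iff.1 h.2 u]
  exact ((h₁.prod h₂).preimage hinj.injOn).subset fun _ hs => ⟨hs.1, hs.2⟩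

lemma finite_measurableSet_bot : {s : Set α | MeasurableSet[⊥] s}.Finite :=
  ((Set.finite_singleton ∅).insert univ).subset fun _ hs => by
    rcases MeasurableSpace.measurableSet_bot_iff.1 hs with h | h <;> simp [h]

end SumSigmaAlgebra

section Mixture

variable {α β : Type*} [MeasurableSpace α] [MeasurableSpace β]

def mixSum (a b : ℝ) (μ : Measure α) (ν : Measure β) : Measure (α ⊕ β) :=
  ENNReal.ofReal a • μ.map Sum.inl + ENNReal.ofReal b • ν.map Sum.inr

variable {a b : ℝ} {μ : Measure α} {ν : Measure β}

lemma isProbabilityMeasure_mixSum [IsProbabilityMeasure μ] [IsProbabilityMeasure ν]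
    (ha : 0 ≤ a) (hb : 0 ≤ b) (hab : a + b = 1) : IsProbabilityMeasure (mixSum a b μ ν) := by
  constructor
  simp [mixSum, Measure.map_apply measurable_inl MeasurableSet.univ,
    Measure.map_apply measurable_inr MeasurableSet.univ, ← ENNReal.ofReal_add ha hb, hab]

lemma lintegral_mixSum (g : α ⊕ β → ℝ≥0∞) :
    ∫⁻ u, g u ∂mixSum a b μ ν =
      ENNReal.ofReal a * ∫⁻ u, g (.inl u) ∂μ + ENNReal.ofReal b * ∫⁻ u, g (.inr u) ∂ν := by
  rw [mixSum, lintegral_add_measure, lintegral_smul_measure, lintegral_smul_measure,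
    measurableEmbedding_inl.lintegral_map, measurableEmbedding_inr.lintegral_map]
  rfl

variable {E : Type*} [NormedAddCommGroup E]

lemma integrable_mixSum {g : α ⊕ β → E} (hl : Integrable (g ∘ .inl) μ)
    (hr : Integrable (g ∘ .inr) ν) : Integrable g (mixSum a b μ ν) :=
  ((measurableEmbedding_inl.integrable_map_iff.2 hl).smul_measure
    ENNReal.ofReal_ne_top).add_measure
    ((measurableEmbedding_inr.integrable_map_iff.2 hr).smul_measure ENNReal.ofReal_ne_top)

lemma setIntegral_mixSum [NormedSpace ℝ E] (ha : 0 ≤ a) (hb : 0 ≤ b) {g : α ⊕ β → E}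
    (hl : Integrable (g ∘ .inl) μ) (hr : Integrable (g ∘ .inr) ν) (s : Set (α ⊕ β)) :
    ∫ u in s, g u ∂mixSum a b μ ν =
      a • ∫ u in .inl ⁻¹' s, g (.inl u) ∂μ + b • ∫ u in .inr ⁻¹' s, g (.inr u) ∂ν := by
  rw [mixSum, Measure.restrict_add, Measure.restrict_smul, Measure.restrict_smul,
    integral_add_measure
      ((measurableEmbedding_inl.integrable_map_iff.2 hl).restrict.smul_measure
        ENNReal.ofReal_ne_top)
      ((measurableEmbedding_inr.integrable_map_iff.2 hr).restrict.smul_measure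
        ENNReal.ofReal_ne_top),
    integral_smul_measure, integral_smul_measure, ENNReal.toReal_ofReal ha,
    ENNReal.toReal_ofReal hb, measurableEmbedding_inl.setIntegral_map,
    measurableEmbedding_inr.setIntegral_map]

end Mixture

lemma erealExp_mixSum {α β : Type} [MeasurableSpace α] [MeasurableSpace β] {a b : ℝ}
    {μ : Measure α} {ν : Measure β} (ha : 0 ≤ a) (hb : 0 ≤ b) (Y : α ⊕ β → EReal) :
    erealExp (mixSum a b μ ν) Y =
      a * erealExp μ (fun u => Y (.inl u)) + b * erealExp ν (fun u => Y (.inr u)) := by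
  have hcoe : ∀ c : ℝ, 0 ≤ c → ∀ P : ℝ≥0∞, ((ENNReal.ofReal c * P : ℝ≥0∞) : EReal) = c * P :=
    fun c hc P => by rw [EReal.coe_ennreal_mul, EReal.coe_ennreal_ofReal, max_eq_left hc]
  simp only [erealExp, lintegral_mixSum, EReal.coe_ennreal_add]
  rw [EReal.add_sub_add_comm (.inl (EReal.coe_ennreal_ne_bot _))
      (.inr (EReal.coe_ennreal_ne_bot _)),
    hcoe a ha, hcoe a ha, hcoe b hb, hcoe b hb,
    EReal.mul_sub_of_nonneg_of_ne_top (by exact_mod_cast ha) (EReal.coe_ne_top a),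
    EReal.mul_sub_of_nonneg_of_ne_top (by exact_mod_cast hb) (EReal.coe_ne_top b)]

def IsMeasurableAtom {α : Type*} (m : MeasurableSpace α) (σ : Set α) : Prop :=
  MeasurableSet[m] σ ∧ σ.Nonempty ∧ ∀ t, MeasurableSet[m] t → t ⊆ σ → t = ∅ ∨ t = σ

section Atoms

variable {α β : Type*} {mα : MeasurableSpace α} {mβ : MeasurableSpace β} {e : α → β}
  {σ : Set β} {v : α}

lemma MeasurableEmbedding.image_preimage_eq_of_isMeasurableAtom (he : MeasurableEmbedding e)
    (hσ : IsMeasurableAtom mβ σ) (hv : e v ∈ σ) : e '' (e ⁻¹' σ) = σ :=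
  (hσ.2.2 _ (he.measurableSet_image' (he.measurable hσ.1))
    (image_preimage_subset _ _)).resolve_left (Nonempty.ne_empty ⟨e v, v, hv, rfl⟩)

lemma MeasurableEmbedding.isMeasurableAtom_preimage (he : MeasurableEmbedding e)
    (hσ : IsMeasurableAtom mβ σ) (hv : e v ∈ σ) : IsMeasurableAtom mα (e ⁻¹' σ) := by
  refine ⟨he.measurable hσ.1, ⟨v, hv⟩, fun t ht hts => ?_⟩
  rcases hσ.2.2 _ (he.measurableSet_image' ht)
    ((image_mono hts).trans (image_preimage_subset _ _)) with h | h
  · exact .inl (image_eq_empty.1 h)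
  · rw [← he.image_preimage_eq_of_isMeasurableAtom hσ hv] at h
    exact .inr (he.injective.image_injective h)

end Atoms

def StepHullsSubset {α E : Type*} [AddCommGroup E] [Module ℝ E] {mα : MeasurableSpace α}
    (w : Set E) (F : Filtration ℕ mα) (M : ℕ → α → E) : Prop :=
  ∀ n σ, IsMeasurableAtom (F n) σ → ∀ u ∈ σ, convexHull ℝ ({M n u} ∪ M (n + 1) '' σ) ⊆ w

section Glue

variable {α β : Type*} [mα : MeasurableSpace α] [mβ : MeasurableSpace β]

def glueFiltration (F : Filtration ℕ mα) (G : Filtration ℕ mβ) :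
    Filtration ℕ (Sum.instMeasurableSpace : MeasurableSpace (α ⊕ β)) where
  seq
    | 0 => ⊥
    | k + 1 => (F k).sum (G k)
  mono' n m hnm := by
    match n, m with
    | 0, _ => exact bot_le
    | k + 1, l + 1 => exact MeasurableSpace.sum_mono (F.mono (by omega)) (G.mono (by omega))
  le'
    | 0 => bot_le
    | k + 1 => MeasurableSpace.sum_mono (F.le k) (G.le k)

def glueProcess {E : Type*} (z : E) (M : ℕ → α → E) (N : ℕ → β → E) : ℕ → α ⊕ β → E
  | 0 => fun _ => z
  | k + 1 => Sum.elim (M k) (N k)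

variable {F : Filtration ℕ mα} {G : Filtration ℕ mβ}

lemma finite_measurableSet_glueFiltration
    (hF : ∀ n, {s : Set α | MeasurableSet[F n] s}.Finite)
    (hG : ∀ n, {s : Set β | MeasurableSet[G n] s}.Finite) (n : ℕ) :
    {s : Set (α ⊕ β) | MeasurableSet[glueFiltration F G n] s}.Finite := by
  cases n with
  | zero => exact finite_measurableSet_bot
  | succ k => exact finite_measurableSet_sum (hF k) (hG k)

lemma measurable_glueProcess {E : Type*} [MeasurableSpace E] {M : ℕ → α → E}
    {N : ℕ → β → E} (z : E) (hM : ∀ n, Measurable[F n] (M n))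
    (hN : ∀ n, Measurable[G n] (N n)) (n : ℕ) :
    Measurable[glueFiltration F G n] (glueProcess z M N n) := by
  cases n with
  | zero => exact measurable_const
  | succ k => exact @Measurable.sumElim _ _ _ (F k) (G k) _ _ _ (hM k) (hN k)

lemma glueProcess_ae_eq_condExp {μ : Measure α} {ν : Measure β} [IsProbabilityMeasure μ]
    [IsProbabilityMeasure ν] {E : Type*} [NormedAddCommGroup E] [NormedSpace ℝ E]
    [CompleteSpace E] [MeasurableSpace E] [BorelSpace E] [SecondCountableTopology E]
    {M : ℕ → α → E} {N : ℕ → β → E} {Minf : α → E} {Ninf : β → E} {a b : ℝ}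
    (ha : 0 ≤ a) (hb : 0 ≤ b) (hab : a + b = 1)
    (hMinf : Integrable Minf μ) (hNinf : Integrable Ninf ν)
    (hMmeas : ∀ n, Measurable[F n] (M n)) (hNmeas : ∀ n, Measurable[G n] (N n))
    (hM : ∀ n, M n =ᵐ[μ] μ[Minf | F n]) (hN : ∀ n, N n =ᵐ[ν] ν[Ninf | G n]) (n : ℕ) :
    glueProcess (a • ∫ u, Minf u ∂μ + b • ∫ u, Ninf u ∂ν) M N n =ᵐ[mixSum a b μ ν]
      (mixSum a b μ ν)[Sum.elim Minf Ninf | glueFiltration F G n] := by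
  have := isProbabilityMeasure_mixSum (μ := μ) (ν := ν) ha hb hab
  have hint : Integrable (Sum.elim Minf Ninf) (mixSum a b μ ν) :=
    integrable_mixSum (g := Sum.elim Minf Ninf) hMinf hNinf
  cases n with
  | zero =>
    have h := setIntegral_mixSum ha hb (g := Sum.elim Minf Ninf) hMinf hNinf univ
    simp only [Measure.restrict_univ, preimage_univ, Sum.elim_inl, Sum.elim_inr] at h
    rw [show glueFiltration F G 0 = ⊥ from rfl, condExp_bot, h]
    rfl
  | succ k =>
    have hMk : Integrable (M k) μ := integrable_condExp.congr (hM k).symm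
    have hNk : Integrable (N k) ν := integrable_condExp.congr (hN k).symm
    refine ae_eq_condExp_of_forall_setIntegral_eq ((glueFiltration F G).le (k + 1)) hint
      (fun s _ _ => (integrable_mixSum (g := glueProcess _ M N (k + 1)) hMk hNk).integrableOn)
      (fun s hs _ => ?_)
      (measurable_glueProcess _ hMmeas hNmeas (k + 1)).stronglyMeasurable.aestronglyMeasurable
    rw [setIntegral_mixSum ha hb (g := glueProcess _ M N (k + 1)) hMk hNk,
      setIntegral_mixSum ha hb (g := Sum.elim Minf Ninf) hMinf hNinf]
    simp only [glueProcess, Sum.elim_inl, Sum.elim_inr]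
    rw [setIntegral_eq_of_ae_eq_condExp (F.le k) hMinf (hM k) hs.1,
      setIntegral_eq_of_ae_eq_condExp (G.le k) hNinf (hN k) hs.2]

lemma stepHullsSubset_glueProcess {E : Type*} [AddCommGroup E] [Module ℝ E] {w : Set E}
    {M : ℕ → α → E} {N : ℕ → β → E} {x y z : E}
    (hM : StepHullsSubset w F M) (hN : StepHullsSubset w G N)
    (hx : ∀ u, M 0 u = x) (hy : ∀ u, N 0 u = y) (hz : z ∈ segment ℝ x y)
    (hseg : segment ℝ x y ⊆ w) : StepHullsSubset w (glueFiltration F G) (glueProcess z M N) := by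
  rintro (_ | k) σ hσ u hu
  · refine (convexHull_min ?_ (convex_segment x y)).trans hseg
    rintro p (rfl | ⟨q | q, -, rfl⟩)
    · exact hz
    · simp [glueProcess, hx, left_mem_segment]
    · simp [glueProcess, hy, right_mem_segment]
  · rcases u with v | v
    · have he := @measurableEmbedding_inl _ _ (F k) (G k)
      rw [← he.image_preimage_eq_of_isMeasurableAtom hσ hu, image_image]
      exact hM k _ (he.isMeasurableAtom_preimage hσ hu) v hu
    · have he := @measurableEmbedding_inr _ _ (F k) (G k)
      rw [← he.image_preimage_eq_of_isMeasurableAtom hσ hu, image_image]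
      exact hN k _ (he.isMeasurableAtom_preimage hσ hu) v hu

end Glue

namespace IsWMart

variable {d : ℕ} {w : Set (Euc d)} {α β : Type} [mα : MeasurableSpace α]
  [mβ : MeasurableSpace β] {μ : Measure α} {ν : Measure β} {F : Filtration ℕ mα}
  {G : Filtration ℕ mβ} {M : ℕ → α → Euc d} {N : ℕ → β → Euc d} {Minf : α → Euc d}
  {Ninf : β → Euc d} {x y : Euc d}

lemma stepHullsSubset (h : IsWMart μ F M Minf w) : StepHullsSubset w F M := by
  obtain ⟨-, -, -, -, -, -, -, hsteps⟩ := h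
  exact fun n σ hσ => hsteps n σ hσ.1 hσ.2.1 hσ.2.2

lemma integral_eq (h : IsWMart μ F M Minf w) (hx : ∀ u, M 0 u = x) : ∫ u, Minf u ∂μ = x := by
  obtain ⟨hμ, -, hF0, -, -, -, hM, -⟩ := h
  have h0 := hM 0
  rw [hF0, condExp_bot] at h0
  obtain ⟨u, hu⟩ := h0.exists
  rw [← hx u, hu]

lemma glue (hX : IsWMart μ F M Minf w) (hY : IsWMart ν G N Ninf w)
    (hx : ∀ u, M 0 u = x) (hy : ∀ u, N 0 u = y) (hseg : segment ℝ x y ⊆ w)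
    {a b : ℝ} (ha : 0 ≤ a) (hb : 0 ≤ b) (hab : a + b = 1) :
    IsWMart (mixSum a b μ ν) (glueFiltration F G) (glueProcess (a • x + b • y) M N)
      (Sum.elim Minf Ninf) w := by
  have hz : a • ∫ u, Minf u ∂μ + b • ∫ u, Ninf u ∂ν ∈ segment ℝ x y := by
    rw [hX.integral_eq hx, hY.integral_eq hy]
    exact ⟨a, b, ha, hb, hab, rfl⟩
  have hsteps := stepHullsSubset_glueProcess hX.stepHullsSubset hY.stepHullsSubset hx hy hz hseg
  rw [← hX.integral_eq hx, ← hY.integral_eq hy]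
  obtain ⟨hμ, hFfin, -, hMmeas, hMinf, hMbd, hMcond, -⟩ := hX
  obtain ⟨hν, hGfin, -, hNmeas, hNinf, hNbd, hNcond, -⟩ := hY
  exact ⟨isProbabilityMeasure_mixSum ha hb hab, finite_measurableSet_glueFiltration hFfin hGfin,
    rfl, measurable_glueProcess _ hMmeas hNmeas,
    integrable_mixSum (g := Sum.elim Minf Ninf) hMinf hNinf, Sum.rec hMbd hNbd,
    glueProcess_ae_eq_condExp ha hb hab hMinf hNinf hMmeas hNmeas hMcond hNcond,
    fun n σ h₁ h₂ h₃ => hsteps n σ ⟨h₁, h₂, h₃⟩⟩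

end IsWMart

lemma isWMart_const {d : ℕ} {w : Set (Euc d)} {x : Euc d} (hx : x ∈ fixedBoundary w)
    (hxw : x ∈ w) :
    IsWMart (Measure.dirac ()) (Filtration.const ℕ ⊥ bot_le) (fun _ _ => x) (fun _ => x) w := by
  refine ⟨inferInstance, fun _ => finite_measurableSet_bot, rfl, fun _ => measurable_const,
    integrable_const x, fun _ => hx, fun n => ?_, fun n σ _ _ _ _ _ => ?_⟩
  · rw [Filtration.const_apply, condExp_const bot_le]
  · refine (convexHull_min ?_ (convex_singleton x)).trans (singleton_subset_iff.2 hxw)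
    rintro p (rfl | ⟨q, -, rfl⟩) <;> rfl

namespace WMartingale

variable {d : ℕ} {w : Set (Euc d)} {x y : Euc d}

def expectedPayoff (f : Euc d → ℝ) (X : WMartingale w) : EReal :=
  @erealExp X.α X.mα X.μ fun u => (f (X.Minf u) : EReal)

def const (hx : x ∈ fixedBoundary w) (hxw : x ∈ w) : WMartingale w :=
  ⟨Unit, inferInstance, Measure.dirac (), Filtration.const ℕ ⊥ bot_le, fun _ _ => x, fun _ => x,
    isWMart_const hx hxw⟩

lemma expectedPayoff_const (f : Euc d → ℝ) (hx : x ∈ fixedBoundary w) (hxw : x ∈ w) :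
    (const hx hxw).expectedPayoff f = f x :=
  erealExp_const (Measure.dirac ()) (f x)

def glue (X Y : WMartingale w) (hx : ∀ u, X.M 0 u = x) (hy : ∀ u, Y.M 0 u = y)
    (hseg : segment ℝ x y ⊆ w) {a b : ℝ} (ha : 0 ≤ a) (hb : 0 ≤ b) (hab : a + b = 1) :
    WMartingale w :=
  letI := X.mα
  letI := Y.mα
  ⟨X.α ⊕ Y.α, inferInstance, mixSum a b X.μ Y.μ, glueFiltration X.F Y.F,
    glueProcess (a • x + b • y) X.M Y.M, Sum.elim X.Minf Y.Minf,
    X.isWMart.glue Y.isWMart hx hy hseg ha hb hab⟩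

lemma expectedPayoff_glue (f : Euc d → ℝ) (X Y : WMartingale w) (hx : ∀ u, X.M 0 u = x)
    (hy : ∀ u, Y.M 0 u = y) (hseg : segment ℝ x y ⊆ w) {a b : ℝ} (ha : 0 ≤ a) (hb : 0 ≤ b)
    (hab : a + b = 1) :
    (X.glue Y hx hy hseg ha hb hab).expectedPayoff f =
      a * X.expectedPayoff f + b * Y.expectedPayoff f :=
  letI := X.mα
  letI := Y.mα
  erealExp_mixSum ha hb _

end WMartingale

section Bellman

variable {d : ℕ} {w : Set (Euc d)} {f : Euc d → ℝ} {x : Euc d}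

lemma expectedPayoff_le_martBellman (X : WMartingale w) (hX : ∀ u, X.M 0 u = x) :
    X.expectedPayoff f ≤ martBellman w f x :=
  le_iSup₂_of_le (f := fun X (_ : ∀ u, X.M 0 u = x) => X.expectedPayoff f) X hX le_rfl

lemma coe_le_martBellman (hw : IsClosed w) (hx : x ∈ fixedBoundary w) :
    (f x : EReal) ≤ martBellman w f x := by
  have hxw : x ∈ w := hw.closure_subset (frontier_subset_closure hx.1)
  rw [← WMartingale.expectedPayoff_const f hx hxw]
  exact expectedPayoff_le_martBellman _ fun _ => rfl

lemma locallyConcaveOn_martBellman : LocallyConcaveOn w (martBellman w f) := by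
  intro x _ y _ hseg a b ha hb hab
  -- `EReal.coe_mul_iSup` needs `0 < a`: for `a = 0` it fails at an empty supremum (`0 * ⊥ = 0`).
  rcases ha.eq_or_lt with rfl | ha'
  · obtain rfl : b = 1 := by linarith
    simp
  rcases hb.eq_or_lt with rfl | hb'
  · obtain rfl : a = 1 := by linarith
    simp
  simp only [martBellman, EReal.coe_mul_iSup _ ha', EReal.coe_mul_iSup _ hb']
  refine EReal.iSup_add_iSup_le fun X Y => EReal.iSup_add_iSup_le fun hX hY => ?_
  exact (WMartingale.expectedPayoff_glue f X Y hX hY hseg ha hb hab).symm.trans_le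
    (expectedPayoff_le_martBellman _ fun _ => rfl)

end Bellman

theorem stmt6_general {d : ℕ} (w : Set (Euc d)) (hw : IsClosed w)
    (f : Euc d → ℝ) :
    martBellman w f ∈ Lambda w (fun x => (f x : EReal)) :=
  ⟨locallyConcaveOn_martBellman, fun _ hx => coe_le_martBellman hw hx⟩

/-- Let `w ⊆ ℝ^d` be a strongly martingale connected closed set and let
`f : ∂_fixed w → ℝ` be bounded from below. Then `ℬ_{w,f} ∈ Λ_{w,f}`: it is locally concave
on `w` and `ℬ_{w,f} ≥ f` on the fixed boundary. -/
theorem stmt6 {d : ℕ} (w : Set (Euc d)) (hw : IsClosed w)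
    (hconn : StronglyMartingaleConnected w) (f : Euc d → ℝ)
    (hbdd : ∃ c : ℝ, ∀ x ∈ fixedBoundary w, c ≤ f x) :
    martBellman w f ∈ Lambda w (fun x => (f x : EReal)) :=
  stmt6_general w hw f
end
end

section
/- Let Ω₀ be a nonempty open convex subset of ℝ² that does not contain any line, let Ω₁ be an open convex subset of ℝ² with cl Ω₁ ⊆ Ω₀, set Ω = cl Ω₀ \ Ω₁, and assume Ω satisfies conditions (1) and (3). Then the Bellman function for the boundary function f(x) = |x| is finite: for every x ∈ Ω, B_{Ω,|·|}(x) = sup{⟨|φ|⟩_I : φ ∈ A_Ω, ⟨φ⟩_I = x} < ∞; moreover B_{Ω,|·|} is bounded on every compact subset of Ω. In fact, there is an affine function L on ℝ² with B_{Ω,|·|}(x) ≤ L(x) for all x ∈ Ω. -/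
open Set MeasureTheory
open scoped ENNReal

noncomputable section

/-- The set `s` contains no (full) line. -/
def ContainsNoLine (s : Set (Euc 2)) : Prop :=
  ¬ ∃ x v : Euc 2, v ≠ 0 ∧ ∀ t : ℝ, x + t • v ∈ s

/-- The boundary of `s` contains no nondegenerate line segment. -/
def NoSegBoundary (s : Set (Euc 2)) : Prop :=
  ¬ ∃ y z : Euc 2, y ≠ z ∧ segment ℝ y z ⊆ frontier s

/-- Condition (1): neither `∂Ω₀` nor `∂Ω₁` contains a line segment. -/
def Cond1 (Ω₀ Ω₁ : Set (Euc 2)) : Prop := NoSegBoundary Ω₀ ∧ NoSegBoundary Ω₁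

/-- The boundary of `s` is a `C²`-smooth curve: near each of its points it admits a regular
`C²` parametrization. -/
def C2SmoothBoundary (s : Set (Euc 2)) : Prop :=
  ∀ x ∈ frontier s, ∃ (ε : ℝ) (γ : ℝ → Euc 2), 0 < ε ∧ ContDiff ℝ 2 γ ∧
    (∀ t : ℝ, deriv γ t ≠ 0) ∧ γ 0 = x ∧ γ '' Ioo (-ε) ε = frontier s ∩ Metric.ball x ε

/-- Condition (3): `Ω₀` is unbounded and every ray contained in `Ω₀` can be translated so
as to lie entirely inside `Ω₁`. -/
def Cond3 (Ω₀ Ω₁ : Set (Euc 2)) : Prop :=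
  (¬ Bornology.IsBounded Ω₀) ∧
  ∀ x v : Euc 2, v ≠ 0 → (∀ t : ℝ, 0 ≤ t → x + t • v ∈ Ω₀) →
    ∃ y : Euc 2, ∀ t : ℝ, 0 ≤ t → y + t • v ∈ Ω₁

/-- The class `A_Ω` on the interval `[a, b]`: summable functions with values in `∂Ω₀`
whose average over every subinterval stays out of `Ω₁`. -/
def classA (Ω₀ Ω₁ : Set (Euc 2)) (a b : ℝ) (φ : ℝ → Euc 2) : Prop :=
  MeasureTheory.IntegrableOn φ (Set.Icc a b) ∧
  (∀ t ∈ Set.Icc a b, φ t ∈ frontier Ω₀) ∧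
  ∀ c e : ℝ, a ≤ c → c < e → e ≤ b → (⨍ t in Set.Icc c e, φ t ∂volume) ∉ Ω₁

/-- `Ω̃₁` determines an extension `cl Ω₀ \ Ω̃₁` of `Ω = cl Ω₀ \ Ω₁`. -/
def IsExtension (Ω₀ Ω₁ Ωt₁ : Set (Euc 2)) : Prop :=
  IsOpen Ωt₁ ∧ Convex ℝ Ωt₁ ∧ closure Ωt₁ ⊆ Ω₁ ∧ Cond1 Ω₀ Ωt₁ ∧ Cond3 Ω₀ Ωt₁

/-- Average over `[0,1]` of a real function, with values in the extended reals: the difference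
of the unsigned integrals of its positive and negative parts (the interval `[0,1]` has unit
length, so no normalization is needed). -/
def avgE (Y : ℝ → ℝ) : EReal :=
  ((∫⁻ t in Set.Icc (0:ℝ) 1, ENNReal.ofReal (Y t) : ℝ≥0∞) : EReal) -
    ((∫⁻ t in Set.Icc (0:ℝ) 1, ENNReal.ofReal (-(Y t)) : ℝ≥0∞) : EReal)

/-- The Bellman function `B_{Ω,f}(x) = sup {⟨f ∘ φ⟩_I : φ ∈ A_Ω, ⟨φ⟩_I = x}`, computed on
the interval `I = [0,1]` (it does not depend on the choice of the interval). -/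
def bellman (Ω₀ Ω₁ : Set (Euc 2)) (f : Euc 2 → ℝ) (x : Euc 2) : EReal :=
  ⨆ (φ : ℝ → Euc 2) (_ : classA Ω₀ Ω₁ 0 1 φ)
      (_ : (⨍ t in Set.Icc (0:ℝ) 1, φ t ∂volume) = x),
    avgE fun t => f (φ t)

/-!
The recession cone `K` of `cl Ω₀` is a closed cone, and it is salient because `Ω₀` contains no
line. Farkas' lemma separates each unit vector `u ∈ K` from `-u`, and compactness of the unit
sphere glues these functionals into one linear `f` with `‖v‖ ≤ f v` on `K`. Unit directions
with `f u ≤ 1/2` form a compact set missing `K`, so the rays from a base point `p` in those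
directions leave `cl Ω₀` after a uniform length; hence `‖x‖ ≤ 2 f x + c` on `cl Ω₀`. Every
`φ ∈ A_Ω` takes values in `∂Ω₀`, so averaging gives `⟨|φ|⟩ ≤ 2 f ⟨φ⟩ + c`.
-/

variable {E : Type*} [NormedAddCommGroup E] [NormedSpace ℝ E]

theorem Convex.add_smul_mem_of_le {C : Set E} (hC : Convex ℝ C) {p u : E} (hp : p ∈ C)
    {s t : ℝ} (hpt : p + t • u ∈ C) (hs : 0 ≤ s) (hst : s ≤ t) : p + s • u ∈ C := by
  rcases hs.eq_or_lt with rfl | hs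
  · simpa using hp
  have ht : 0 < t := hs.trans_le hst
  simpa [smul_smul, div_mul_cancel₀ s ht.ne'] using
    hC.add_smul_mem hp hpt ⟨div_nonneg hs.le ht.le, div_le_one_of_le₀ hst ht.le⟩

/-- The recession cone of `C` seen from `p`; for closed convex `C` it does not depend on `p`. -/
def recessionCone {C : Set E} (hC : IsClosed C) (hCconv : Convex ℝ C) {p : E} (hp : p ∈ C) :
    ProperCone ℝ E where
  carrier := {v | ∀ t : ℝ, 0 ≤ t → p + t • v ∈ C}
  zero_mem' _ _ := by simpa using hp
  add_mem' {v w} hv hw t ht := by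
    convert hCconv (hv (2 * t) (by positivity)) (hw (2 * t) (by positivity))
      (by norm_num : (0 : ℝ) ≤ 1 / 2) (by norm_num : (0 : ℝ) ≤ 1 / 2) (by norm_num) using 1
    module
  smul_mem' c v hv t ht := by
    have := hv (t * c) (mul_nonneg ht c.2)
    rwa [mul_smul] at this
  isClosed' := by
    simp only [ofPred_forall]
    exact isClosed_iInter fun t => isClosed_iInter fun _ => hC.preimage (by fun_prop)

theorem ProperCone.exists_norm_le_of_salient [ProperSpace E] (K : ProperCone ℝ E)
    (hK : ∀ v ∈ K, -v ∈ K → v = 0) : ∃ f : StrongDual ℝ E, ∀ v ∈ K, ‖v‖ ≤ f v := by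
  set S := Metric.sphere (0 : E) 1 ∩ K
  have hS : IsCompact S := (isCompact_sphere 0 1).inter_right K.isClosed
  obtain ⟨f, -, hfS⟩ : ∃ f : StrongDual ℝ E, (∀ v ∈ K, 0 ≤ f v) ∧ ∀ u ∈ S, u ∈ K → 0 < f u := by
    refine hS.induction_on ⟨0, by simp⟩ ?_ ?_ ?_
    · rintro T T' hTT' ⟨f, hfK, hfT'⟩
      exact ⟨f, hfK, fun u hu => hfT' u (hTT' hu)⟩
    · rintro T T' ⟨f, hfK, hfT⟩ ⟨g, hgK, hgT'⟩
      refine ⟨f + g, fun v hv => add_nonneg (hfK v hv) (hgK v hv), ?_⟩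
      rintro u (hu | hu) huK
      · exact add_pos_of_pos_of_nonneg (hfT u hu huK) (hgK u huK)
      · exact add_pos_of_nonneg_of_pos (hfK u huK) (hgT' u hu huK)
    · rintro u ⟨hu, huK⟩
      have hnu : -u ∉ K := fun h => by simp [hK u huK h] at hu
      obtain ⟨f, hfK, hfu⟩ := K.hyperplane_separation_point hnu
      refine ⟨{w | 0 < f w}, mem_nhdsWithin_of_mem_nhds ?_, f, hfK, fun w hw _ => hw⟩
      exact (isOpen_lt continuous_const f.continuous).mem_nhds (by simpa using hfu)
  obtain ⟨δ, hδ, hδS⟩ := hS.exists_forall_le' f.continuous.continuousOn fun u hu => hfS u hu hu.2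
  refine ⟨δ⁻¹ • f, fun v hv => ?_⟩
  rcases eq_or_ne v 0 with rfl | hv0
  · simp
  have hvS := hδS (‖v‖⁻¹ • v) ⟨by simp [norm_smul, hv0], K.smul_mem hv (by positivity)⟩
  rw [map_smul, smul_eq_mul, inv_mul_eq_div, le_div_iff₀ (norm_pos_iff.2 hv0)] at hvS
  rw [FunLike.coe_smul, Pi.smul_apply, smul_eq_mul, le_inv_mul_iff₀ hδ]
  exact hvS

theorem exists_nat_add_smul_notMem [ProperSpace E] {C : Set E} {hC : IsClosed C}
    {hCconv : Convex ℝ C} {p : E} {hp : p ∈ C} {f : StrongDual ℝ E}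
    (hf : ∀ v ∈ recessionCone hC hCconv hp, ‖v‖ ≤ f v) :
    ∃ n : ℕ, ∀ u : E, ‖u‖ = 1 → f u ≤ 1 / 2 → p + (n : ℝ) • u ∉ C := by
  set U := Metric.sphere (0 : E) 1 ∩ {u | f u ≤ 1 / 2}
  have hU : IsCompact U :=
    (isCompact_sphere 0 1).inter_right (isClosed_le f.continuous continuous_const)
  set D : ℕ → Set E := fun n => {u | p + (n : ℝ) • u ∈ C}
  have hD : ∀ n, IsClosed (D n) := fun n => hC.preimage (by fun_prop)
  have hDanti : ∀ ⦃m n : ℕ⦄, m ≤ n → D n ⊆ D m := fun m n hmn u hu =>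
    hCconv.add_smul_mem_of_le hp hu m.cast_nonneg (by exact_mod_cast hmn)
  have hUD : U ∩ ⋂ n, D n = ∅ := by
    refine eq_empty_of_forall_notMem fun u ⟨⟨hu, hfu⟩, huD⟩ => ?_
    have huK : u ∈ recessionCone hC hCconv hp := fun t ht =>
      hCconv.add_smul_mem_of_le hp (mem_iInter.1 huD ⌈t⌉₊) ht (Nat.le_ceil t)
    have := hf u huK
    simp only [mem_sphere_iff_norm, sub_zero] at hu
    simp only [mem_ofPred_eq] at hfu
    linarith
  obtain ⟨n, hn⟩ := hU.elim_directed_family_closed D hD hUD (directed_of_isDirected_le hDanti)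
  exact ⟨n, fun u hu hfu hpu => (eq_empty_iff_forall_notMem.1 hn) u ⟨⟨by simpa using hu, hfu⟩, hpu⟩⟩

theorem Convex.exists_norm_le_add_const [ProperSpace E] {C : Set E} (hCconv : Convex ℝ C)
    (hC : IsClosed C) {p : E} (hp : p ∈ C) (hline : ∀ v : E, (∀ t : ℝ, p + t • v ∈ C) → v = 0) :
    ∃ (f : StrongDual ℝ E) (c : ℝ), ∀ x ∈ C, ‖x‖ ≤ f x + c := by
  have hsalient : ∀ v ∈ recessionCone hC hCconv hp, -v ∈ recessionCone hC hCconv hp → v = 0 := by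
    refine fun v hv hnv => hline v fun t => ?_
    rcases le_total 0 t with ht | ht
    · exact hv t ht
    · simpa using hnv (-t) (neg_nonneg.2 ht)
  obtain ⟨f, hf⟩ := (recessionCone hC hCconv hp).exists_norm_le_of_salient hsalient
  obtain ⟨n, hn⟩ := exists_nat_add_smul_notMem hf
  refine ⟨(2 : ℝ) • f, ‖p‖ - 2 * f p + n * (1 + 2 * ‖f‖), fun x hx => ?_⟩
  have hfx : -(‖f‖ * ‖x - p‖) ≤ f (x - p) := neg_le_of_abs_le (f.le_opNorm (x - p))
  have hdist : ‖x - p‖ ≤ 2 * f (x - p) + n * (1 + 2 * ‖f‖) := by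
    rcases le_or_gt ‖x - p‖ n with hsmall | hbig
    · nlinarith [norm_nonneg f]
    have hxp : 0 < ‖x - p‖ := (Nat.cast_nonneg n).trans_lt hbig
    set u := ‖x - p‖⁻¹ • (x - p)
    have hu : ‖u‖ = 1 := by simp [u, norm_smul, hxp.ne']
    have hpu : p + ‖x - p‖ • u ∈ C := by simpa [u, smul_smul, hxp.ne'] using hx
    have hfu : 1 / 2 < f u := lt_of_not_ge fun h =>
      hn u hu h (hCconv.add_smul_mem_of_le hp hpu n.cast_nonneg hbig.le)
    have : f (x - p) = ‖x - p‖ * f u := by simp [u, hxp.ne']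
    nlinarith [norm_nonneg f]
  have := norm_sub_norm_le x p
  simp only [map_sub] at hdist
  simp only [FunLike.coe_smul, Pi.smul_apply, smul_eq_mul]
  linarith

theorem Convex.add_smul_mem_of_forall_mem_closure {Ω : Set E} (hΩconv : Convex ℝ Ω)
    (hΩ : IsOpen Ω) {p v : E} (hp : p ∈ Ω) (hv : ∀ t : ℝ, p + t • v ∈ closure Ω) (t : ℝ) :
    p + t • v ∈ Ω := by
  have := hΩconv.combo_interior_closure_mem_interior (by rwa [hΩ.interior_eq]) (hv (2 * t))
    (by norm_num : (0 : ℝ) < 1 / 2) (by norm_num : (0 : ℝ) ≤ 1 / 2) (by norm_num)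
  rw [hΩ.interior_eq] at this
  convert this using 1
  module

theorem exists_norm_le_add_const_of_containsNoLine {Ω₀ : Set (Euc 2)} (h0ne : Ω₀.Nonempty)
    (h0open : IsOpen Ω₀) (h0conv : Convex ℝ Ω₀) (h0line : ContainsNoLine Ω₀) :
    ∃ (f : StrongDual ℝ (Euc 2)) (c : ℝ), ∀ x ∈ closure Ω₀, ‖x‖ ≤ f x + c := by
  obtain ⟨p, hp⟩ := h0ne
  refine h0conv.closure.exists_norm_le_add_const isClosed_closure (subset_closure hp)
    fun v hv => by_contra fun hv0 => h0line ?_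
  exact ⟨p, v, hv0, h0conv.add_smul_mem_of_forall_mem_closure h0open hp hv⟩

theorem setAverage_Icc_zero_one {F : Type*} [NormedAddCommGroup F] [NormedSpace ℝ F]
    (φ : ℝ → F) : ⨍ t in Icc (0 : ℝ) 1, φ t = ∫ t in Icc (0 : ℝ) 1, φ t := by
  simp [setAverage_eq, measureReal_def, Real.volume_Icc]

theorem avgE_le_integral {Y Z : ℝ → ℝ} (hY : ∀ t, 0 ≤ Y t) (hZ : IntegrableOn Z (Icc 0 1))
    (hYZ : ∀ t ∈ Icc (0 : ℝ) 1, Y t ≤ Z t) :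
    avgE Y ≤ ((∫ t in Icc (0 : ℝ) 1, Z t : ℝ) : EReal) := by
  have hZ0 : 0 ≤ᵐ[volume.restrict (Icc (0 : ℝ) 1)] Z :=
    ae_restrict_of_forall_mem measurableSet_Icc fun t ht => (hY t).trans (hYZ t ht)
  have hneg : ∫⁻ t in Icc (0 : ℝ) 1, ENNReal.ofReal (-Y t) = 0 := by
    simp [ENNReal.ofReal_eq_zero.2 (neg_nonpos.2 (hY _))]
  calc avgE Y = ((∫⁻ t in Icc (0 : ℝ) 1, ENNReal.ofReal (Y t) : ℝ≥0∞) : EReal) := by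
        simp [avgE, hneg]
    _ ≤ ((ENNReal.ofReal (∫ t in Icc (0 : ℝ) 1, Z t) : ℝ≥0∞) : EReal) := by
        rw [ofReal_integral_eq_lintegral_ofReal hZ hZ0]
        exact EReal.coe_ennreal_le_coe_ennreal_iff.2 <| setLIntegral_mono' measurableSet_Icc
          fun t ht => ENNReal.ofReal_le_ofReal (hYZ t ht)
    _ = _ := by rw [EReal.coe_ennreal_ofReal, max_eq_left (integral_nonneg_of_ae hZ0)]

theorem bellman_le_of_le_affine {Ω₀ Ω₁ : Set (Euc 2)} {g : Euc 2 → ℝ} (hg : ∀ y, 0 ≤ g y)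
    {f : StrongDual ℝ (Euc 2)} {c : ℝ} (hgf : ∀ y ∈ frontier Ω₀, g y ≤ f y + c) (x : Euc 2) :
    bellman Ω₀ Ω₁ g x ≤ ((f x + c : ℝ) : EReal) := by
  refine iSup_le fun φ => iSup_le fun hA => iSup_le fun hx => ?_
  obtain ⟨hφ, hφΩ, -⟩ := hA
  rw [setAverage_Icc_zero_one] at hx
  have hfφ : IntegrableOn (fun t => f (φ t)) (Icc 0 1) := f.integrable_comp hφ
  have hint : ∫ t in Icc (0 : ℝ) 1, (f (φ t) + c) = f x + c := by
    rw [integral_add hfφ (integrable_const c), f.integral_comp_comm hφ, hx]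
    simp [measureReal_def, Real.volume_Icc]
  rw [← hint]
  exact avgE_le_integral (fun t => hg _) (hfφ.add (integrable_const c))
    fun t ht => hgf _ (hφΩ t ht)

theorem stmt10_general (Ω₀ Ω₁ : Set (Euc 2)) (h0ne : Ω₀.Nonempty) (h0open : IsOpen Ω₀)
    (h0conv : Convex ℝ Ω₀) (h0line : ContainsNoLine Ω₀) :
    (∀ x ∈ closure Ω₀ \ Ω₁, bellman Ω₀ Ω₁ (fun y => ‖y‖) x < ⊤) ∧
    (∀ K : Set (Euc 2), IsCompact K → K ⊆ closure Ω₀ \ Ω₁ →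
      ∃ C : ℝ, ∀ x ∈ K, bellman Ω₀ Ω₁ (fun y => ‖y‖) x ≤ (C : EReal)) ∧
    (∃ L : Euc 2 →ᵃ[ℝ] ℝ, ∀ x ∈ closure Ω₀ \ Ω₁,
      bellman Ω₀ Ω₁ (fun y => ‖y‖) x ≤ ((L x : ℝ) : EReal)) := by
  obtain ⟨f, c, hfc⟩ := exists_norm_le_add_const_of_containsNoLine h0ne h0open h0conv h0line
  have hB : ∀ x, bellman Ω₀ Ω₁ (fun y => ‖y‖) x ≤ ((f x + c : ℝ) : EReal) :=
    bellman_le_of_le_affine norm_nonneg fun y hy => hfc y (frontier_subset_closure hy)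
  refine ⟨fun x _ => (hB x).trans_lt (EReal.coe_lt_top _), fun K hK _ => ?_,
    f.toLinearMap.toAffineMap + AffineMap.const ℝ (Euc 2) c, fun x _ => hB x⟩
  obtain ⟨C, hC⟩ := hK.bddAbove_image (f := fun x => f x + c) (by fun_prop)
  exact ⟨C, fun x hx => (hB x).trans (EReal.coe_le_coe_iff.2 (hC ⟨x, hx, rfl⟩))⟩

/-- Under conditions (1) and (3), the Bellman function for the boundary
function `f(x) = |x|` is finite on `Ω = cl Ω₀ \ Ω₁`, bounded on every compact subset of `Ω`,
and in fact dominated on `Ω` by an affine function `L`. -/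
theorem stmt10 (Ω₀ Ω₁ : Set (Euc 2)) (h0ne : Ω₀.Nonempty) (h0open : IsOpen Ω₀)
    (h0conv : Convex ℝ Ω₀) (h0line : ContainsNoLine Ω₀)
    (h1open : IsOpen Ω₁) (h1conv : Convex ℝ Ω₁) (h1cl : closure Ω₁ ⊆ Ω₀)
    (h1 : Cond1 Ω₀ Ω₁) (h3 : Cond3 Ω₀ Ω₁) :
    (∀ x ∈ closure Ω₀ \ Ω₁, bellman Ω₀ Ω₁ (fun y => ‖y‖) x < ⊤) ∧
    (∀ K : Set (Euc 2), IsCompact K → K ⊆ closure Ω₀ \ Ω₁ →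
      ∃ C : ℝ, ∀ x ∈ K, bellman Ω₀ Ω₁ (fun y => ‖y‖) x ≤ (C : EReal)) ∧
    (∃ L : Euc 2 →ᵃ[ℝ] ℝ, ∀ x ∈ closure Ω₀ \ Ω₁,
      bellman Ω₀ Ω₁ (fun y => ‖y‖) x ≤ ((L x : ℝ) : EReal)) :=
  stmt10_general Ω₀ Ω₁ h0ne h0open h0conv h0line
end
end

section
/- Let Ω₀ be a nonempty open convex subset of ℝ² that does not contain any line, let Ω₁ be an open convex subset of ℝ² with cl Ω₁ ⊆ Ω₀, set Ω = cl Ω₀ \ Ω₁, assume Ω satisfies conditions (1) and (3), and let Ω̃ = cl Ω₀ \ Ω̃₁ be an extension of Ω. Let φ ∈ A_Ω be defined on an interval I. Then there exists a partition of I into two intervals I₁ and I₂ with disjoint interiors such that the segment [⟨φ⟩_{I₁}, ⟨φ⟩_{I₂}] is contained in Ω̃ and max(|I₁|/|I₂|, |I₂|/|I₁|) ≤ Δ(⟨φ⟩_I), where Δ(x) = sup{ max(1, |x−y|/|x−z|) : x ∈ [y,z], y ∈ Ω, z ∈ cl Ω̃₁ }. -/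
open Set MeasureTheory
open scoped ENNReal

noncomputable section

/-- The function `Δ(x) = sup { max(1, |x−y|/|x−z|) : x ∈ [y,z], y ∈ Ω, z ∈ cl Ω̃₁ }`. -/
def Delta (Ω Ωt₁ : Set (Euc 2)) (x : Euc 2) : ℝ :=
  sSup {r : ℝ | ∃ y ∈ Ω, ∃ z ∈ closure Ωt₁,
    x ∈ segment ℝ y z ∧ r = max 1 (dist x y / dist x z)}

/-!
Write `A c`, `B c` for the averages of `φ` over `[a, c]`, `[c, b]` and `X` for the average over
`[a, b]`. Then `(c - a) • (A c - X) + (b - c) • (B c - X) = 0`, and `A b = B a = X ∉ cl Ω̃₁`.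
If the segment `[A c, B c]` at the midpoint `c` meets `Ω̃₁`, say along its half `[A c, X]`, move
`c` towards `b` until `[A c, X]` first misses `Ω̃₁`. There it still touches `cl Ω̃₁` at some `z`,
while convexity of `Ω̃₁` keeps the other half `[X, B c]` out of `Ω̃₁`. Since `X ∈ [B c, z]`,
`(c - a) / (b - c) = |X - B c| / |X - A c| ≤ |X - B c| / |X - z| ≤ Δ(X)`, and the other ratio
is at most `1` because `c` lies past the midpoint.

`Δ(X)` is a supremum of a bounded set (so the `sSup` is not a junk value) because `Ω₀` contains
no line: ratios tending to infinity yield a direction `v` in which `cl Ω₀` recedes; by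
condition (3) `cl Ω̃₁` then recedes in direction `v`, and the far points of `cl Ω̃₁` show that it
also recedes in direction `-v`, so the line it contains would lie in `Ω₀`.
-/

open Set Filter Topology Metric

section Recession

variable {E : Type*} [NormedAddCommGroup E] [NormedSpace ℝ E]

def IsRecessionDir (C : Set E) (v : E) : Prop :=
  ∀ w ∈ C, ∀ s : ℝ, 0 ≤ s → w + s • v ∈ C

theorem IsRecessionDir.of_tendsto {C : Set E} (hC : IsClosed C) (hconv : Convex ℝ C)
    {z : ℕ → E} (hz : ∀ n, z n ∈ C) {d : ℕ → ℝ} (hd : Tendsto d atTop atTop) {v : E}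
    (hv : Tendsto (fun n => (d n)⁻¹ • z n) atTop (𝓝 v)) : IsRecessionDir C v := by
  intro w hw s hs
  have hmem : ∀ᶠ n in atTop, w + (s * (d n)⁻¹) • (z n - w) ∈ C := by
    filter_upwards [hd.eventually_ge_atTop (max s 1)] with n hn
    have hd0 : 0 < d n := by linarith [le_max_right s 1]
    refine hconv.add_smul_sub_mem hw (hz n) ⟨by positivity, ?_⟩
    rw [mul_inv_le_iff₀ hd0, one_mul]
    exact (le_max_left s 1).trans hn
  have hlim : Tendsto (fun n => w + s • ((d n)⁻¹ • z n) - (s * (d n)⁻¹) • w) atTop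
      (𝓝 (w + s • v - (s * 0) • w)) :=
    (tendsto_const_nhds.add (hv.const_smul s)).sub
      ((hd.inv_tendsto_atTop.const_mul s).smul_const w)
  rw [mul_zero, zero_smul, sub_zero] at hlim
  exact hC.mem_of_tendsto (hlim.congr fun n => by module) hmem

theorem IsRecessionDir.of_ray {C : Set E} (hC : IsClosed C) (hconv : Convex ℝ C) {p v : E}
    (hray : ∀ s : ℝ, 0 ≤ s → p + s • v ∈ C) : IsRecessionDir C v := by
  refine .of_tendsto hC hconv (fun n => hray n n.cast_nonneg) tendsto_natCast_atTop_atTop ?_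
  have hlim : Tendsto (fun n : ℕ => (n : ℝ)⁻¹ • p + v) atTop (𝓝 ((0 : ℝ) • p + v)) :=
    (tendsto_inv_atTop_zero.comp tendsto_natCast_atTop_atTop).smul_const p |>.add
      tendsto_const_nhds
  rw [zero_smul, zero_add] at hlim
  refine hlim.congr' ?_
  filter_upwards [eventually_ne_atTop 0] with n hn
  rw [smul_add, smul_smul, inv_mul_cancel₀ (Nat.cast_ne_zero.2 hn), one_smul]

theorem IsRecessionDir.add_smul_mem_of_isOpen {Ω : Set E} (hopen : IsOpen Ω)
    (hconv : Convex ℝ Ω) {v : E} (hv : IsRecessionDir (closure Ω) v) {q : E} (hq : q ∈ Ω)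
    {s : ℝ} (hs : 0 ≤ s) : q + s • v ∈ Ω := by
  have hfar : q + (2 * s) • v ∈ closure Ω := hv q (subset_closure hq) _ (by positivity)
  have hmid := hconv.combo_interior_closure_mem_interior (hopen.interior_eq.symm ▸ hq) hfar
    (a := 1 / 2) (b := 1 / 2) (by norm_num) (by norm_num) (by norm_num)
  rw [hopen.interior_eq] at hmid
  convert hmid using 1
  module

theorem IsRecessionDir.add_smul_mem_of_neg {C : Set E} {v : E} (hv : IsRecessionDir C v)
    (hv' : IsRecessionDir C (-v)) {w : E} (hw : w ∈ C) (r : ℝ) : w + r • v ∈ C := by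
  rcases le_total 0 r with hr | hr
  · exact hv w hw r hr
  · simpa using hv' w hw (-r) (neg_nonneg.2 hr)

theorem IsRecessionDir.neg_of_tendsto {K : Set E} (hK : IsClosed K) (hKc : Convex ℝ K) {u x : E}
    (hu : IsRecessionDir K u) (hx : x ∉ K) {t : ℕ → ℝ} {v : ℕ → E} (ht : ∀ n, 0 ≤ t n)
    (hz : ∀ n, x - t n • v n ∈ K) (hv : Tendsto v atTop (𝓝 u)) : IsRecessionDir K (-u) := by
  obtain ⟨ε, hε, hball⟩ := Metric.isOpen_iff.1 hK.isOpen_compl x hx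
  -- `x + t n • (u - v n) ∈ K` stays `ε` away from `x`, which forces `t n → ∞`
  have hfar : ∀ n, ε ≤ t n * ‖u - v n‖ := by
    intro n
    have hmem : x + t n • (u - v n) ∈ K := by
      convert hu _ (hz n) (t n) (ht n) using 1
      module
    by_contra! hlt
    refine hball ?_ hmem
    rwa [mem_ball, dist_eq_norm, add_sub_cancel_left, norm_smul, Real.norm_of_nonneg (ht n)]
  have htop : Tendsto t atTop atTop := by
    rw [Filter.tendsto_atTop]
    intro M
    filter_upwards [Metric.tendsto_nhds.1 hv (ε / (|M| + 1)) (by positivity)] with n hn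
    rw [dist_eq_norm, norm_sub_rev, lt_div_iff₀ (by positivity)] at hn
    nlinarith [hfar n, ht n, le_abs_self M, norm_nonneg (u - v n)]
  refine .of_tendsto hK hKc hz htop ?_
  have hlim : Tendsto (fun n => (t n)⁻¹ • x - v n) atTop (𝓝 ((0 : ℝ) • x - u)) :=
    (htop.inv_tendsto_atTop.smul_const x).sub hv
  rw [zero_smul, zero_sub] at hlim
  refine hlim.congr' ?_
  filter_upwards [htop.eventually_gt_atTop 0] with n hn
  rw [smul_sub, smul_smul, inv_mul_cancel₀ hn.ne', one_smul]

theorem exists_norm_eq_one_isRecessionDir [ProperSpace E] {C : Set E} (hC : IsClosed C)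
    (hconv : Convex ℝ C) (hub : ¬ Bornology.IsBounded C) :
    ∃ u : E, ‖u‖ = 1 ∧ IsRecessionDir C u := by
  have hfar : ∀ n : ℕ, ∃ w ∈ C, (n : ℝ) + 1 ≤ ‖w‖ := by
    intro n
    by_contra! h
    exact hub ((isBounded_closedBall (x := 0) (r := n + 1)).subset fun w hw => by
      simpa using (h w hw).le)
  choose w hwC hwn using hfar
  have hsphere : ∀ n, ‖w n‖⁻¹ • w n ∈ sphere (0 : E) 1 := fun n => by
    have : 0 < ‖w n‖ := lt_of_lt_of_le (by positivity) (hwn n)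
    simp [norm_smul, this.ne']
  obtain ⟨u, hu, ψ, hψ, hlim⟩ := (isCompact_sphere (0 : E) 1).tendsto_subseq hsphere
  refine ⟨u, by simpa using hu, .of_tendsto hC hconv (fun n => hwC (ψ n)) ?_ hlim⟩
  exact tendsto_atTop_mono (fun n => hwn (ψ n))
    ((tendsto_atTop_add_const_right _ 1 tendsto_natCast_atTop_atTop).comp hψ.tendsto_atTop)

end Recession

section Segment

variable {E : Type*} [NormedAddCommGroup E] [NormedSpace ℝ E]

theorem sub_eq_neg_smul_of_mem_segment {x y z : E} (h : x ∈ segment ℝ y z) (hxy : x ≠ y) :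
    z - x = -(dist x z / dist x y) • (y - x) := by
  have hray : ‖x - y‖ • (z - x) = ‖z - x‖ • (x - y) :=
    (mem_segment_iff_wbtw.1 h).sameRay_vsub.norm_smul_eq
  have hxy' : ‖x - y‖ ≠ 0 := norm_ne_zero_iff.2 (sub_ne_zero.2 hxy)
  rw [← dist_eq_norm, ← dist_eq_norm, dist_comm z] at *
  calc z - x = (dist x y)⁻¹ • (dist x y • (z - x)) := (inv_smul_smul₀ hxy' _).symm
    _ = -(dist x z / dist x y) • (y - x) := by rw [hray]; module

theorem mem_segment_of_smul_sub_add_smul_sub_eq_zero {A B X : E} {α β : ℝ} (hα : 0 ≤ α)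
    (hβ : 0 ≤ β) (hαβ : 0 < α + β) (h : α • (A - X) + β • (B - X) = 0) :
    X ∈ segment ℝ A B := by
  refine ⟨α / (α + β), β / (α + β), by positivity, by positivity, by field_simp, ?_⟩
  have hX : α • A + β • B = (α + β) • X := by linear_combination (norm := module) h
  rw [div_eq_inv_mul, div_eq_inv_mul, mul_smul, mul_smul, ← smul_add, hX, smul_smul,
    inv_mul_cancel₀ hαβ.ne', one_smul]

theorem segment_subset_union_segment {A B X : E} (hX : X ∈ segment ℝ A B) :
    segment ℝ A B ⊆ segment ℝ A X ∪ segment ℝ X B := by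
  intro p hp
  simp only [mem_union, mem_segment_iff_wbtw] at *
  have hAXp : Wbtw ℝ A p X ∨ Wbtw ℝ A X p := by
    obtain ⟨μ, hμ, rfl⟩ := hX
    obtain ⟨θ, hθ, rfl⟩ := hp
    simp only [AffineMap.lineMap_apply]
    exact wbtw_or_wbtw_smul_vadd_of_nonneg A (B -ᵥ A) hθ.1 hμ.1
  exact hAXp.imp id hp.trans_left_right

theorem div_le_dist_div_dist {A B X z : E} {α β : ℝ} (hα : 0 < α) (hβ : 0 < β)
    (h : α • (A - X) + β • (B - X) = 0) (hz : z ∈ segment ℝ A X) (hzX : z ≠ X) :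
    α / β ≤ dist X B / dist X z := by
  have hnorm : α * dist A X = β * dist X B := by
    have heq : α • (A - X) = β • (X - B) := by linear_combination (norm := module) h
    simpa [norm_smul, dist_eq_norm, abs_of_pos hα, abs_of_pos hβ] using congrArg norm heq
  have hle : dist z X ≤ dist A X := by
    linarith [dist_add_dist_of_mem_segment hz, dist_nonneg (x := A) (y := z)]
  rw [div_le_div_iff₀ hβ (dist_pos.2 hzX.symm), dist_comm X z]
  nlinarith

theorem isOpen_setOf_not_disjoint_segment {W : Set E} (hW : IsOpen W) (X : E) :
    IsOpen {Y | ¬Disjoint (segment ℝ Y X) W} := by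
  have hunion : {Y | ¬Disjoint (segment ℝ Y X) W} =
      ⋃ θ ∈ Icc (0 : ℝ) 1, (fun Y => AffineMap.lineMap Y X θ) ⁻¹' W := by
    ext Y
    simp [segment_eq_image_lineMap, Set.not_disjoint_iff]
  rw [hunion]
  exact isOpen_biUnion fun θ _ =>
    hW.preimage (by simp only [AffineMap.lineMap_apply_module]; fun_prop)

theorem isClosed_setOf_not_disjoint_segment {K : Set E} (hK : IsClosed K) (X : E) :
    IsClosed {Y | ¬Disjoint (segment ℝ Y X) K} := by
  have hproj : {Y | ¬Disjoint (segment ℝ Y X) K} =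
      Prod.fst '' {p : E × Icc (0 : ℝ) 1 | AffineMap.lineMap p.1 X (p.2 : ℝ) ∈ K} := by
    ext Y
    simp [segment_eq_image_lineMap, Set.not_disjoint_iff]
  rw [hproj]
  exact isClosedMap_fst_of_compactSpace _
    (hK.preimage (by simp only [AffineMap.lineMap_apply_module]; fun_prop))

theorem exists_mem_closure_notMem_of_isPreconnected {α β : Type*} [TopologicalSpace α]
    [TopologicalSpace β] {I : Set α} (hI : IsPreconnected I) {f : α → β} (hf : ContinuousOn f I)
    {S : Set β} (hS : IsOpen S) {p q : α} (hp : p ∈ I) (hq : q ∈ I) (hpS : f p ∈ S)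
    (hqS : f q ∉ S) : ∃ c ∈ I, f c ∈ closure S ∧ f c ∉ S := by
  by_contra! h
  refine hqS ((hI.image f hf).subset_of_closure_inter_subset hS ⟨f p, mem_image_of_mem f hp, hpS⟩
    ?_ (mem_image_of_mem f hq))
  rintro _ ⟨hY, c, hc, rfl⟩
  exact h c hc hY

theorem Convex.disjoint_segment_of_wbtw {W : Set E} (hWo : IsOpen W) (hWc : Convex ℝ W)
    {z X B : E} (hzXB : Wbtw ℝ z X B) (hz : z ∈ closure W) (hX : X ∉ closure W) :
    Disjoint (segment ℝ X B) W := by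
  refine Set.disjoint_left.2 fun p hp hpW => hX (subset_closure ?_)
  have hXzp : X ∈ openSegment ℝ z p := by
    refine mem_openSegment_of_ne_left_right (by rintro rfl; exact hX hz) ?_ ?_
    · rintro rfl; exact hX (subset_closure hpW)
    · exact (hzXB.trans_right_left (mem_segment_iff_wbtw.1 hp)).mem_segment
  have := hWc.openSegment_closure_interior_subset_interior hz (hWo.interior_eq.symm ▸ hpW) hXzp
  rwa [hWo.interior_eq] at this

theorem div_le_and_disjoint_segment_of_touch {W : Set E} (hWo : IsOpen W) (hWc : Convex ℝ W)
    {Ω : Set E} {X : E} {M : ℝ}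
    (hM : ∀ y ∈ Ω, ∀ z ∈ closure W, X ∈ segment ℝ y z → dist X y / dist X z ≤ M)
    (hX : X ∉ closure W) ⦃Y Z : E⦄ ⦃α β : ℝ⦄ (hα : 0 < α) (hβ : 0 < β)
    (h : α • (Y - X) + β • (Z - X) = 0) (hZ : Z ∈ Ω)
    (hY : ¬Disjoint (segment ℝ Y X) (closure W)) :
    α / β ≤ M ∧ Disjoint (segment ℝ Z X) W := by
  obtain ⟨z, hzY, hzW⟩ := Set.not_disjoint_iff.1 hY
  have hYXZ : X ∈ segment ℝ Y Z :=
    mem_segment_of_smul_sub_add_smul_sub_eq_zero hα.le hβ.le (by positivity) h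
  have hzXZ : Wbtw ℝ z X Z :=
    (mem_segment_iff_wbtw.1 hYXZ).trans_left_right (mem_segment_iff_wbtw.1 hzY)
  have hzX : z ≠ X := by rintro rfl; exact hX hzW
  refine ⟨(div_le_dist_div_dist hα hβ h hzY hzX).trans (hM Z hZ z hzW hzXZ.symm.mem_segment), ?_⟩
  rw [segment_symm]
  exact Convex.disjoint_segment_of_wbtw hWo hWc hzXZ hzW hX

theorem exists_splitting_point {W : Set E} (hWo : IsOpen W) (hWc : Convex ℝ W) {a b : ℝ}
    (hab : a < b) {A B : ℝ → E} {X : E} (hX : X ∉ closure W) (hA : ContinuousOn A (Ioc a b))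
    (hAb : A b = X) (hB : ContinuousOn B (Ico a b)) (hBa : B a = X)
    (hsplit : ∀ c ∈ Ioo a b, (c - a) • (A c - X) + (b - c) • (B c - X) = 0)
    {Ω : Set E} (hAΩ : ∀ c ∈ Ioo a b, A c ∈ Ω) (hBΩ : ∀ c ∈ Ioo a b, B c ∈ Ω) {M : ℝ}
    (hM1 : 1 ≤ M) (hM : ∀ y ∈ Ω, ∀ z ∈ closure W, X ∈ segment ℝ y z → dist X y / dist X z ≤ M) :
    ∃ c ∈ Ioo a b, Disjoint (segment ℝ (A c) (B c)) W ∧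
      max ((c - a) / (b - c)) ((b - c) / (c - a)) ≤ M := by
  set S := {Y | ¬Disjoint (segment ℝ Y X) W}
  have hS : IsOpen S := isOpen_setOf_not_disjoint_segment hWo X
  have hclS : closure S ⊆ {Y | ¬Disjoint (segment ℝ Y X) (closure W)} :=
    closure_minimal (fun Y hY hdisj => hY (hdisj.mono_right subset_closure))
      (isClosed_setOf_not_disjoint_segment isClosed_closure X)
  have hXS : X ∉ closure S := fun h => hclS h (by simpa [segment_same] using hX)
  have htouch := div_le_and_disjoint_segment_of_touch hWo hWc hM hX
  have hgood : ∀ c ∈ Ioo a b, A c ∉ S → B c ∉ S → Disjoint (segment ℝ (A c) (B c)) W := by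
    intro c hc hAc hBc
    refine (Disjoint.union_left (not_not.1 hAc) ?_).mono_left (segment_subset_union_segment
      (mem_segment_of_smul_sub_add_smul_sub_eq_zero (sub_pos.2 hc.1).le (sub_pos.2 hc.2).le
        (by linarith [hc.1, hc.2]) (hsplit c hc)))
    rw [segment_symm]
    exact not_not.1 hBc
  set c₀ := (a + b) / 2 with hc₀def
  have hc₀ : c₀ ∈ Ioo a b := ⟨by linarith, by linarith⟩
  by_cases hA₀ : A c₀ ∈ S
  · obtain ⟨c, hc, hAc, hAcS⟩ := exists_mem_closure_notMem_of_isPreconnected isPreconnected_Icc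
      (hA.mono (Icc_subset_Ioc_iff hc₀.2.le |>.2 ⟨hc₀.1, le_rfl⟩)) hS (left_mem_Icc.2 hc₀.2.le)
      (right_mem_Icc.2 hc₀.2.le) hA₀ (hAb ▸ fun h => hXS (subset_closure h))
    have hc' : c ∈ Ioo a b :=
      ⟨hc₀.1.trans_le hc.1, hc.2.lt_of_ne (by rintro rfl; exact hXS (hAb ▸ hAc))⟩
    obtain ⟨hratio, hBc⟩ := htouch (sub_pos.2 hc'.1) (sub_pos.2 hc'.2) (hsplit c hc')
      (hBΩ c hc') (hclS hAc)
    refine ⟨c, hc', hgood c hc' hAcS (not_not.2 hBc), max_le hratio (le_trans ?_ hM1)⟩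
    rw [div_le_one (sub_pos.2 hc'.1)]
    linarith [hc.1, hc₀def]
  by_cases hB₀ : B c₀ ∈ S
  · obtain ⟨c, hc, hBc, hBcS⟩ := exists_mem_closure_notMem_of_isPreconnected isPreconnected_Icc
      (hB.mono (Icc_subset_Ico_iff hc₀.1.le |>.2 ⟨le_rfl, hc₀.2⟩)) hS (right_mem_Icc.2 hc₀.1.le)
      (left_mem_Icc.2 hc₀.1.le) hB₀ (hBa ▸ fun h => hXS (subset_closure h))
    have hc' : c ∈ Ioo a b :=
      ⟨hc.1.lt_of_ne (by rintro rfl; exact hXS (hBa ▸ hBc)), hc.2.trans_lt hc₀.2⟩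
    obtain ⟨hratio, hAc⟩ := htouch (sub_pos.2 hc'.2) (sub_pos.2 hc'.1)
      (by rw [add_comm]; exact hsplit c hc') (hAΩ c hc') (hclS hBc)
    refine ⟨c, hc', hgood c hc' (not_not.2 hAc) hBcS, max_le (le_trans ?_ hM1) hratio⟩
    rw [div_le_one (sub_pos.2 hc'.2)]
    linarith [hc.2, hc₀def]
  refine ⟨c₀, hc₀, hgood c₀ hc₀ hA₀ hB₀, ?_⟩
  rw [show c₀ - a = b - c₀ by ring, div_self (by linarith [hc₀.2]), max_self]
  exact hM1

end Segment


theorem Cond3.exists_ray {Ω₀ W : Set (Euc 2)} (hW : Cond3 Ω₀ W) (h0open : IsOpen Ω₀)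
    (h0conv : Convex ℝ Ω₀) {q v : Euc 2} (hq : q ∈ Ω₀) (hv : IsRecessionDir (closure Ω₀) v)
    (hv0 : v ≠ 0) : ∃ p, ∀ s : ℝ, 0 ≤ s → p + s • v ∈ W :=
  hW.2 q v hv0 fun _ hs => hv.add_smul_mem_of_isOpen h0open h0conv hq hs

theorem Cond3.nonempty {Ω₀ W : Set (Euc 2)} (hW : Cond3 Ω₀ W) (h0open : IsOpen Ω₀)
    (h0conv : Convex ℝ Ω₀) : W.Nonempty := by
  obtain ⟨q, hq⟩ := Bornology.nonempty_of_not_isBounded hW.1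
  obtain ⟨v, hv1, hv⟩ := exists_norm_eq_one_isRecessionDir isClosed_closure h0conv.closure
    fun h => hW.1 (h.subset subset_closure)
  obtain ⟨p, hp⟩ := hW.exists_ray h0open h0conv hq hv (norm_ne_zero_iff.1 (hv1 ▸ one_ne_zero))
  exact ⟨p, by simpa using hp 0 le_rfl⟩

theorem exists_dist_le_mul_dist {Ω₀ W : Set (Euc 2)} (h0open : IsOpen Ω₀) (h0conv : Convex ℝ Ω₀)
    (h0line : ContainsNoLine Ω₀) (hWconv : Convex ℝ W) (hWΩ₀ : closure W ⊆ Ω₀) (hW : Cond3 Ω₀ W)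
    {x : Euc 2} (hx : x ∉ closure W) :
    ∃ M, ∀ y ∈ closure Ω₀, ∀ z ∈ closure W, x ∈ segment ℝ y z → dist x y ≤ M * dist x z := by
  obtain ⟨ε, hε, hball⟩ := Metric.isOpen_iff.1 isClosed_closure.isOpen_compl x hx
  by_contra! h
  choose y hy z hz hxyz hlt using fun n : ℕ => h n
  have hεz : ∀ n, ε ≤ dist x (z n) := fun n =>
    not_lt.1 fun hlt' => hball (mem_ball'.2 hlt') (hz n)
  set s := fun n => dist x (y n)
  have hs : Tendsto s atTop atTop :=
    tendsto_atTop_mono (fun n => (mul_le_mul_of_nonneg_left (hεz n) n.cast_nonneg).trans (hlt n).le)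
      (tendsto_natCast_atTop_atTop.atTop_mul_const hε)
  have hs0 : ∀ n, 0 < s n := fun n => (mul_nonneg n.cast_nonneg dist_nonneg).trans_lt (hlt n)
  set u := fun n => (s n)⁻¹ • (y n - x)
  have hu : ∀ n, u n ∈ sphere (0 : Euc 2) 1 := fun n => by
    simp [u, s, norm_smul, ← dist_eq_norm, dist_comm, (hs0 n).ne']
  have hzu : ∀ n, z n = x - dist x (z n) • u n := fun n => by
    conv_lhs => rw [sub_eq_iff_eq_add'.1 (sub_eq_neg_smul_of_mem_segment (hxyz n)
      (dist_pos.1 (hs0 n)))]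
    module
  obtain ⟨v, hv, ψ, hψ, hlim⟩ := (isCompact_sphere (0 : Euc 2) 1).tendsto_subseq hu
  have hv0 : v ≠ 0 := ne_zero_of_mem_unit_sphere ⟨v, hv⟩
  have hΩ₀ : IsRecessionDir (closure Ω₀) v := by
    refine .of_tendsto isClosed_closure h0conv.closure (fun n => hy (ψ n))
      (hs.comp hψ.tendsto_atTop) ?_
    have hlim' : Tendsto (fun n => (s (ψ n))⁻¹ • x + u (ψ n)) atTop (𝓝 ((0 : ℝ) • x + v)) :=
      (((hs.comp hψ.tendsto_atTop).inv_tendsto_atTop).smul_const x).add hlim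
    rw [zero_smul, zero_add] at hlim'
    refine hlim'.congr fun n => ?_
    simp only [Function.comp, u, smul_sub]
    abel
  have hWv : IsRecessionDir (closure W) v := by
    obtain ⟨p, hp⟩ := hW.exists_ray h0open h0conv (hWΩ₀ (hz 0)) hΩ₀ hv0
    exact .of_ray isClosed_closure hWconv.closure fun s hs => subset_closure (hp s hs)
  have hWv' : IsRecessionDir (closure W) (-v) :=
    hWv.neg_of_tendsto isClosed_closure hWconv.closure hx (fun _ => dist_nonneg)
      (fun n => hzu (ψ n) ▸ hz (ψ n)) hlim
  exact h0line ⟨z 0, v, hv0, fun r => hWΩ₀ (hWv.add_smul_mem_of_neg hWv' (hz 0) r)⟩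

theorem le_Delta {Ω W : Set (Euc 2)} {x : Euc 2} (hx : x ∉ closure W)
    (hbdd : ∃ M, ∀ y ∈ Ω, ∀ z ∈ closure W, x ∈ segment ℝ y z → dist x y ≤ M * dist x z)
    ⦃y z : Euc 2⦄ (hy : y ∈ Ω) (hz : z ∈ closure W) (hxyz : x ∈ segment ℝ y z) :
    max 1 (dist x y / dist x z) ≤ Delta Ω W x := by
  obtain ⟨M, hM⟩ := hbdd
  refine le_csSup ⟨max 1 M, ?_⟩ ⟨y, hy, z, hz, hxyz, rfl⟩
  rintro _ ⟨y, hy, z, hz, hxyz, rfl⟩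
  have hxz : 0 < dist x z := dist_pos.2 fun h => hx (h ▸ hz)
  exact max_le_max le_rfl ((div_le_iff₀ hxz).2 (hM y hy z hz hxyz))


section Average

variable {E : Type*} [NormedAddCommGroup E] [NormedSpace ℝ E] {φ : ℝ → E} {a b : ℝ}

theorem setAverage_Icc_eq_smul_intervalIntegral (hab : a < b) (φ : ℝ → E) :
    ⨍ t in Icc a b, φ t = (b - a)⁻¹ • ∫ t in a..b, φ t := by
  rw [setAverage_eq, Real.volume_real_Icc_of_le hab.le, integral_Icc_eq_integral_Ioc,
    ← intervalIntegral.integral_of_le hab.le]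

theorem continuousOn_setAverage_Icc (hφ : IntegrableOn φ (Icc a b)) :
    ContinuousOn (fun c => ⨍ t in Icc a c, φ t) (Ioc a b) := by
  rcases le_total b a with hba | hab
  · simp [Ioc_eq_empty_of_le hba]
  have hprim := intervalIntegral.continuousOn_primitive_interval (by rwa [uIcc_of_le hab])
  rw [uIcc_of_le hab] at hprim
  exact (((continuousOn_id.sub continuousOn_const).inv₀ fun c hc => sub_ne_zero.2 hc.1.ne').smul
    (hprim.mono Ioc_subset_Icc_self)).congr fun c hc =>
      setAverage_Icc_eq_smul_intervalIntegral hc.1 φ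

theorem continuousOn_setAverage_Icc_left (hφ : IntegrableOn φ (Icc a b)) :
    ContinuousOn (fun c => ⨍ t in Icc c b, φ t) (Ico a b) := by
  rcases le_total b a with hba | hab
  · simp [Ico_eq_empty_of_le hba]
  have hprim := intervalIntegral.continuousOn_primitive_interval_left (by rwa [uIcc_of_le hab])
  rw [uIcc_of_le hab] at hprim
  exact (((continuousOn_const.sub continuousOn_id).inv₀ fun c hc => sub_ne_zero.2 hc.2.ne').smul
    (hprim.mono Ico_subset_Icc_self)).congr fun c hc =>
      setAverage_Icc_eq_smul_intervalIntegral hc.2 φ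

theorem smul_sub_setAverage_add_smul_sub_setAverage (hφ : IntegrableOn φ (Icc a b)) {c : ℝ}
    (hc : c ∈ Ioo a b) :
    (c - a) • ((⨍ t in Icc a c, φ t) - ⨍ t in Icc a b, φ t) +
      (b - c) • ((⨍ t in Icc c b, φ t) - ⨍ t in Icc a b, φ t) = 0 := by
  have hII : IntervalIntegrable φ volume a b :=
    (intervalIntegrable_iff_integrableOn_Icc_of_le (hc.1.trans hc.2).le).2 hφ
  have hcab : c ∈ uIcc a b := mem_uIcc_of_le hc.1.le hc.2.le
  rw [setAverage_Icc_eq_smul_intervalIntegral hc.1, setAverage_Icc_eq_smul_intervalIntegral hc.2,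
    setAverage_Icc_eq_smul_intervalIntegral (hc.1.trans hc.2),
    ← intervalIntegral.integral_add_adjacent_intervals
      (hII.mono_set (uIcc_subset_uIcc_left hcab))
      (hII.mono_set (uIcc_subset_uIcc_right hcab))]
  have hca : c - a ≠ 0 := sub_ne_zero.2 hc.1.ne'
  have hbc : b - c ≠ 0 := sub_ne_zero.2 hc.2.ne'
  have hba : b - a ≠ 0 := sub_ne_zero.2 (hc.1.trans hc.2).ne'
  match_scalars <;> field_simp <;> ring

theorem classA.setAverage_mem {Ω₀ Ω₁ : Set (Euc 2)} {φ : ℝ → Euc 2}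
    (hφ : classA Ω₀ Ω₁ a b φ) (h0conv : Convex ℝ Ω₀) {c e : ℝ} (hac : a ≤ c) (hce : c < e)
    (heb : e ≤ b) : ⨍ t in Icc c e, φ t ∈ closure Ω₀ \ Ω₁ := by
  refine ⟨h0conv.closure.set_average_mem isClosed_closure ?_ (by simp) ?_
    (hφ.1.mono_set (Icc_subset_Icc hac heb)), hφ.2.2 c e hac hce heb⟩
  · simpa using hce
  · exact ae_restrict_of_forall_mem measurableSet_Icc fun t ht =>
      frontier_subset_closure (hφ.2.1 t ⟨hac.trans ht.1, ht.2.trans heb⟩)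

end Average

theorem stmt12_general (Ω₀ Ω₁ Ωt₁ : Set (Euc 2)) (h0open : IsOpen Ω₀)
    (h0conv : Convex ℝ Ω₀) (h0line : ContainsNoLine Ω₀)
    (h1cl : closure Ω₁ ⊆ Ω₀)
    (hext : IsExtension Ω₀ Ω₁ Ωt₁)
    (a b : ℝ) (hab : a < b) (φ : ℝ → Euc 2) (hφ : classA Ω₀ Ω₁ a b φ) :
    ∃ c : ℝ, a < c ∧ c < b ∧
      segment ℝ (⨍ t in Set.Icc a c, φ t ∂volume) (⨍ t in Set.Icc c b, φ t ∂volume) ⊆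
        closure Ω₀ \ Ωt₁ ∧
      max ((c - a) / (b - c)) ((b - c) / (c - a)) ≤
        Delta (closure Ω₀ \ Ω₁) Ωt₁ (⨍ t in Set.Icc a b, φ t ∂volume) := by
  obtain ⟨htopen, htconv, htcl, -, ht3⟩ := hext
  set X := ⨍ t in Icc a b, φ t
  have hX : X ∈ closure Ω₀ \ Ω₁ := hφ.setAverage_mem h0conv le_rfl hab le_rfl
  have hXt : X ∉ closure Ωt₁ := fun h => hX.2 (htcl h)
  have hAΩ : ∀ c ∈ Ioo a b, ⨍ t in Icc a c, φ t ∈ closure Ω₀ \ Ω₁ :=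
    fun c hc => hφ.setAverage_mem h0conv le_rfl hc.1 hc.2.le
  have hBΩ : ∀ c ∈ Ioo a b, ⨍ t in Icc c b, φ t ∈ closure Ω₀ \ Ω₁ :=
    fun c hc => hφ.setAverage_mem h0conv hc.1.le hc.2 le_rfl
  have hbdd : ∃ M, ∀ y ∈ closure Ω₀ \ Ω₁, ∀ z ∈ closure Ωt₁, X ∈ segment ℝ y z →
      dist X y ≤ M * dist X z :=
    (exists_dist_le_mul_dist h0open h0conv h0line htconv (htcl.trans (subset_closure.trans h1cl))
      ht3 hXt).imp fun _ hM y hy => hM y hy.1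
  have hΔ := le_Delta hXt hbdd
  obtain ⟨z₀, hz₀⟩ := ht3.nonempty h0open h0conv
  obtain ⟨c, hc, hdisj, hratio⟩ := exists_splitting_point htopen htconv hab hXt
    (continuousOn_setAverage_Icc hφ.1) rfl (continuousOn_setAverage_Icc_left hφ.1) rfl
    (fun c hc => smul_sub_setAverage_add_smul_sub_setAverage hφ.1 hc) hAΩ hBΩ
    ((le_max_left _ _).trans (hΔ hX (subset_closure hz₀) (left_mem_segment ℝ X z₀)))
    fun y hy z hz hyz => (le_max_right _ _).trans (hΔ hy hz hyz)
  refine ⟨c, hc.1, hc.2, fun p hp => ⟨?_, Set.disjoint_left.1 hdisj hp⟩, hratio⟩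
  exact h0conv.closure.segment_subset (hAΩ c hc).1 (hBΩ c hc).1 hp

/-- **Splitting lemma.** Let `Ω = cl Ω₀ \ Ω₁` satisfy conditions (1), (3),
let `Ω̃ = cl Ω₀ \ Ω̃₁` be an extension of `Ω`, and let `φ ∈ A_Ω` on `I = [a,b]`. Then `I`
splits into `I₁ = [a,c]` and `I₂ = [c,b]` such that `[⟨φ⟩_{I₁}, ⟨φ⟩_{I₂}] ⊆ Ω̃` and
`max(|I₁|/|I₂|, |I₂|/|I₁|) ≤ Δ(⟨φ⟩_I)`. -/
theorem stmt12 (Ω₀ Ω₁ Ωt₁ : Set (Euc 2)) (h0ne : Ω₀.Nonempty) (h0open : IsOpen Ω₀)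
    (h0conv : Convex ℝ Ω₀) (h0line : ContainsNoLine Ω₀)
    (h1open : IsOpen Ω₁) (h1conv : Convex ℝ Ω₁) (h1cl : closure Ω₁ ⊆ Ω₀)
    (h1 : Cond1 Ω₀ Ω₁) (h3 : Cond3 Ω₀ Ω₁)
    (hext : IsExtension Ω₀ Ω₁ Ωt₁)
    (a b : ℝ) (hab : a < b) (φ : ℝ → Euc 2) (hφ : classA Ω₀ Ω₁ a b φ) :
    ∃ c : ℝ, a < c ∧ c < b ∧
      segment ℝ (⨍ t in Set.Icc a c, φ t ∂volume) (⨍ t in Set.Icc c b, φ t ∂volume) ⊆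
        closure Ω₀ \ Ωt₁ ∧
      max ((c - a) / (b - c)) ((b - c) / (c - a)) ≤
        Delta (closure Ω₀ \ Ω₁) Ωt₁ (⨍ t in Set.Icc a b, φ t ∂volume) :=
  stmt12_general Ω₀ Ω₁ Ωt₁ h0open h0conv h0line h1cl hext a b hab φ hφ
end
end
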